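/- arXiv:2205.13075 — 8 statements merged into one kernel-verified Lean document; each statement's English description precedes it below -/
import Mathlib

section
/- Two finite signed measures μ, ν on [0,∞) are equal if and only if their Laplace transforms agree: ∫ e^{−λx} μ(dx) = ∫ e^{−λx} ν(dx) for all λ > 0. -/
open MeasureTheory Filter Topology Set
open scoped NNReal ENNReal BoundedContinuousFunction

/-- The Laplace transform of a finite signed measure on `[0,∞)`, via its Jordan
decomposition. -/
noncomputable def laplaceTransform (μ : MeasureTheory.SignedMeasure ℝ≥0) (l : ℝ) : ℝ :=
  (∫ x, Real.exp (-(l * (x : ℝ))) ∂μ.toJordanDecomposition.posPart) -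
    ∫ x, Real.exp (-(l * (x : ℝ))) ∂μ.toJordanDecomposition.negPart

/-!
Writing `μ = μ⁺ - μ⁻` (Jordan decomposition), `μ = ν` iff `μ⁺ + ν⁻ = ν⁺ + μ⁻`, and the Laplace
transforms of `μ` and `ν` agree iff those of these two finite measures do. For a finite measure `P`
on `[0,∞)`, `λ ↦ ∫ e^{-λx} dP` is continuous on `[0,∞)`, so agreement for `λ > 0` extends to
`λ = 0`. The values at `λ = n ∈ ℕ` are the integrals of the powers of `e^{-x}`, hence the integrals
of all polynomials in `e^{-x}`; these form a point-separating algebra of bounded continuous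
functions, which determines a finite measure by Stone–Weierstrass.
-/

lemma Real.exp_neg_mul_le_one {l x : ℝ} (hl : 0 ≤ l) (hx : 0 ≤ x) : Real.exp (-(l * x)) ≤ 1 :=
  Real.exp_le_one_iff.mpr (neg_nonpos.mpr (mul_nonneg hl hx))

section FiniteMeasure

variable {P Q : Measure ℝ≥0} [IsFiniteMeasure P] [IsFiniteMeasure Q]

lemma integrable_exp_neg_mul {l : ℝ} (hl : 0 ≤ l) :
    Integrable (fun x : ℝ≥0 => Real.exp (-(l * x))) P :=
  (integrable_const 1).mono' (by fun_prop) (ae_of_all _ fun x => by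
    rw [Real.norm_of_nonneg (Real.exp_pos _).le]; exact Real.exp_neg_mul_le_one hl x.2)

lemma continuousOn_integral_exp_neg_mul :
    ContinuousOn (fun l : ℝ => ∫ x, Real.exp (-(l * x)) ∂P) (Ici 0) :=
  continuousOn_of_dominated (bound := fun _ => 1) (fun _ _ => by fun_prop)
    (fun _ hl => ae_of_all _ fun x => by
      rw [Real.norm_of_nonneg (Real.exp_pos _).le]; exact Real.exp_neg_mul_le_one hl x.2)
    (integrable_const 1) (ae_of_all _ fun _ => by fun_prop)

noncomputable def expNeg : ℝ≥0 →ᵇ ℝ :=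
  .ofNormedAddCommGroup (fun x => Real.exp (-(x : ℝ))) (by fun_prop) 1 fun _ => by simp

lemma expNeg_apply_pow (x : ℝ≥0) (n : ℕ) : expNeg x ^ n = Real.exp (-(n * x)) := by
  rw [neg_mul_eq_mul_neg, Real.exp_nat_mul]
  rfl

lemma expNeg_injective : Function.Injective expNeg := fun x _ h =>
  NNReal.coe_injective <| neg_injective <| Real.exp_injective (h : Real.exp (-(x : ℝ)) = _)

lemma star_expNeg : star expNeg = expNeg := by
  ext; simp

lemma ext_of_forall_integral_exp_neg_nat_mul_eq
    (h : ∀ n : ℕ, ∫ x, Real.exp (-(n * x)) ∂P = ∫ x, Real.exp (-(n * x)) ∂Q) : P = Q := by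
  refine ext_of_forall_mem_subalgebra_integral_eq_of_pseudoEMetric_complete_countable
    (A := StarAlgebra.adjoin ℝ {expNeg}) ?_ fun g hg => ?_
  · intro x y hxy
    exact ⟨_, ⟨_, ⟨expNeg, StarAlgebra.subset_adjoin ℝ _ rfl, rfl⟩, rfl⟩, expNeg_injective.ne hxy⟩
  · rw [← StarSubalgebra.mem_toSubalgebra, StarAlgebra.adjoin_toSubalgebra, Set.star_singleton,
      star_expNeg, Set.union_self, Algebra.adjoin_singleton_eq_range_aeval] at hg
    obtain ⟨p, rfl⟩ := hg
    have hint (R : Measure ℝ≥0) [IsFiniteMeasure R] (i : ℕ) :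
        Integrable (fun x : ℝ≥0 => p.coeff i * Real.exp (-(i * x))) R :=
      (integrable_exp_neg_mul i.cast_nonneg).const_mul _
    simp only [AlgHom.toRingHom_eq_coe, RingHom.coe_coe, Polynomial.aeval_eq_sum_range,
      BoundedContinuousFunction.coe_sum, BoundedContinuousFunction.coe_smul, Finset.sum_apply,
      smul_eq_mul, BoundedContinuousFunction.coe_pow, Pi.pow_apply, expNeg_apply_pow]
    rw [integral_finsetSum _ fun i _ => hint P i, integral_finsetSum _ fun i _ => hint Q i]
    simp_rw [integral_const_mul, h]

lemma ext_of_forall_integral_exp_neg_mul_eq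
    (h : ∀ l : ℝ, 0 < l → ∫ x, Real.exp (-(l * x)) ∂P = ∫ x, Real.exp (-(l * x)) ∂Q) :
    P = Q := by
  have hext : EqOn (fun l : ℝ => ∫ x, Real.exp (-(l * x)) ∂P)
      (fun l : ℝ => ∫ x, Real.exp (-(l * x)) ∂Q) (Ici 0) :=
    EqOn.of_subset_closure h continuousOn_integral_exp_neg_mul continuousOn_integral_exp_neg_mul
      Ioi_subset_Ici_self (closure_Ioi 0).superset
  exact ext_of_forall_integral_exp_neg_nat_mul_eq fun n => hext (mem_Ici.2 n.cast_nonneg)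

end FiniteMeasure

namespace MeasureTheory

lemma SignedMeasure.eq_of_posPart_add_negPart_eq {α : Type*} [MeasurableSpace α]
    {μ ν : SignedMeasure α}
    (h : μ.toJordanDecomposition.posPart + ν.toJordanDecomposition.negPart =
      ν.toJordanDecomposition.posPart + μ.toJordanDecomposition.negPart) : μ = ν := by
  rw [← μ.toSignedMeasure_toJordanDecomposition, ← ν.toSignedMeasure_toJordanDecomposition,
    JordanDecomposition.toSignedMeasure, JordanDecomposition.toSignedMeasure,
    sub_eq_sub_iff_add_eq_add, ← Measure.toSignedMeasure_add, ← Measure.toSignedMeasure_add]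
  simp only [h]

end MeasureTheory

lemma laplaceTransform_eq_iff {μ ν : SignedMeasure ℝ≥0} {l : ℝ} (hl : 0 ≤ l) :
    laplaceTransform μ l = laplaceTransform ν l ↔
      ∫ x, Real.exp (-(l * x)) ∂(μ.toJordanDecomposition.posPart + ν.toJordanDecomposition.negPart)
        = ∫ x, Real.exp (-(l * x)) ∂(ν.toJordanDecomposition.posPart +
          μ.toJordanDecomposition.negPart) := by
  rw [laplaceTransform, laplaceTransform, sub_eq_sub_iff_add_eq_add,
    integral_add_measure (integrable_exp_neg_mul hl) (integrable_exp_neg_mul hl),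
    integral_add_measure (integrable_exp_neg_mul hl) (integrable_exp_neg_mul hl)]

/-- two finite signed measures on `[0,∞)` are equal if and only if their
Laplace transforms agree for all `λ > 0`. -/
theorem signed_measure_eq_iff_laplace_eq (μ ν : MeasureTheory.SignedMeasure ℝ≥0) :
    μ = ν ↔ ∀ l : ℝ, 0 < l → laplaceTransform μ l = laplaceTransform ν l := by
  refine ⟨fun h _ _ => h ▸ rfl, fun h => SignedMeasure.eq_of_posPart_add_negPart_eq ?_⟩
  exact ext_of_forall_integral_exp_neg_mul_eq fun l hl => (laplaceTransform_eq_iff hl.le).1 (h l hl)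
end

section
/- Let μ, ν be generalised signed Radon measures on [0,∞) such that ∫ e^{−λx} |μ|(dx) < ∞ and ∫ e^{−λx} |ν|(dx) < ∞ for all λ > 0. If Ψ_μ(λ) = Ψ_ν(λ) for all λ > 0, then μ = ν. -/
open MeasureTheory
open scoped NNReal ENNReal BoundedContinuousFunction

/-!
Ψ_μ = Ψ_ν says that the positive measures `μ⁺ + ν⁻` and `ν⁺ + μ⁻` have the same Laplace transform.
After weighting by the density `e^{-x}` they become finite, and the values of their Laplace
transforms at `λ = n + 1` are the integrals of the powers of the injective bounded function
`e^{-x}`. By Stone–Weierstrass, polynomials in an injective bounded continuous function separate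
finite measures, so `μ⁺ + ν⁻ = ν⁺ + μ⁻`. Mutual singularity then splits this identity: a measure
singular to `ν` and dominated by `ρ + ν` is dominated by `ρ`.
-/

theorem MeasureTheory.ext_of_forall_integral_pow_eq {E : Type*} [MeasurableSpace E]
    [TopologicalSpace E] [PolishSpace E] [BorelSpace E] {P P' : Measure E}
    [IsFiniteMeasure P] [IsFiniteMeasure P'] (g : E →ᵇ ℝ) (hg : Function.Injective g)
    (h : ∀ n : ℕ, ∫ x, g x ^ n ∂P = ∫ x, g x ^ n ∂P') : P = P' := by
  refine ext_of_forall_mem_subalgebra_integral_eq_of_polish (A := StarAlgebra.adjoin ℝ {g})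
    (fun x y hxy => ⟨g, ⟨g.toContinuousMap, ⟨g, StarAlgebra.subset_adjoin ℝ {g} rfl, rfl⟩, rfl⟩,
      hg.ne hxy⟩) fun f hf => ?_
  replace hf : f ∈ Submodule.span ℝ (Submonoid.powers g) := by
    have hstar : star g = g := by ext; simp
    have hf' : f ∈ (StarAlgebra.adjoin ℝ {g}).toSubalgebra := hf
    rw [StarAlgebra.adjoin_toSubalgebra, Set.star_singleton, hstar, Set.union_self] at hf'
    rwa [Submonoid.powers_eq_closure, ← Algebra.adjoin_eq_span]
  induction hf using Submodule.span_induction with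
  | mem f hf =>
    obtain ⟨n, rfl⟩ := hf
    simpa using h n
  | zero => simp
  | add f₁ f₂ _ _ h₁ h₂ =>
    simp only [BoundedContinuousFunction.coe_add, Pi.add_apply]
    rw [integral_add (f₁.integrable P) (f₂.integrable P),
      integral_add (f₁.integrable P') (f₂.integrable P'), h₁, h₂]
  | smul c f _ hf =>
    simp only [BoundedContinuousFunction.coe_smul, integral_smul, hf]

theorem MeasureTheory.withDensity_left_inj {α : Type*} [MeasurableSpace α] {μ ν : Measure α}
    {f : α → ℝ≥0∞} (hf : Measurable f) (hf_ne_zero : ∀ x, f x ≠ 0) (hf_ne_top : ∀ x, f x ≠ ∞) :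
    μ.withDensity f = ν.withDensity f ↔ μ = ν := by
  refine ⟨fun h => ?_, fun h => h ▸ rfl⟩
  have hinv (ρ : Measure α) : (ρ.withDensity f).withDensity (fun x => (f x)⁻¹) = ρ :=
    withDensity_inv_same hf (ae_of_all _ hf_ne_zero) (ae_of_all _ hf_ne_top)
  rw [← hinv μ, h, hinv]

namespace MeasureTheory.Measure.MutuallySingular

variable {α : Type*} [MeasurableSpace α]

theorem le_of_le_add {μ ν ρ : Measure α} (h : μ ⟂ₘ ν) (hle : μ ≤ ρ + ν) : μ ≤ ρ :=
  calc μ = μ.restrict h.nullSetᶜ := by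
        rw [← zero_add (μ.restrict _), ← h.restrict_nullSet,
          Measure.restrict_add_restrict_compl h.measurableSet_nullSet]
    _ ≤ (ρ + ν).restrict h.nullSetᶜ := Measure.restrict_mono le_rfl hle
    _ = ρ.restrict h.nullSetᶜ := by rw [Measure.restrict_add, h.restrict_compl_nullSet, add_zero]
    _ ≤ ρ := Measure.restrict_le_self

theorem eq_of_add_eq_add {μ₁ μ₂ ν₁ ν₂ : Measure α} (hμ : μ₁ ⟂ₘ μ₂) (hν : ν₁ ⟂ₘ ν₂)
    (h : μ₁ + ν₂ = ν₁ + μ₂) : μ₁ = ν₁ ∧ μ₂ = ν₂ := by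
  refine ⟨le_antisymm (hμ.le_of_le_add ?_) (hν.le_of_le_add ?_),
    le_antisymm (hμ.symm.le_of_le_add ?_) (hν.symm.le_of_le_add ?_)⟩
  · exact h ▸ Measure.le_add_right le_rfl
  · exact h ▸ Measure.le_add_right le_rfl
  · rw [add_comm, h]; exact Measure.le_add_left le_rfl
  · rw [add_comm, ← h]; exact Measure.le_add_left le_rfl

end MeasureTheory.Measure.MutuallySingular

noncomputable def expNegNNReal : ℝ≥0 →ᵇ ℝ :=
  .mkOfBound ⟨fun x => Real.exp (-(x : ℝ)), by fun_prop⟩ 1 fun x y => by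
    have hx : Real.exp (-(x : ℝ)) ≤ 1 := Real.exp_le_one_iff.2 (by simp)
    have hy : Real.exp (-(y : ℝ)) ≤ 1 := Real.exp_le_one_iff.2 (by simp)
    simp only [ContinuousMap.coe_mk, Real.dist_eq, abs_le]
    constructor <;> linarith [Real.exp_pos (-(x : ℝ)), Real.exp_pos (-(y : ℝ))]

theorem expNegNNReal_apply (x : ℝ≥0) : expNegNNReal x = Real.exp (-(x : ℝ)) := rfl

theorem expNegNNReal_injective : Function.Injective expNegNNReal := fun x y hxy => by
  simpa [expNegNNReal_apply] using hxy

theorem integral_expNegNNReal_pow_withDensity (κ : Measure ℝ≥0) (n : ℕ) :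
    ∫ x, expNegNNReal x ^ n ∂κ.withDensity (fun x => ENNReal.ofReal (expNegNNReal x)) =
      ∫ x, Real.exp (-((n + 1) * (x : ℝ))) ∂κ := by
  rw [integral_withDensity_eq_integral_toReal_smul (by fun_prop)
    (ae_of_all _ fun _ => ENNReal.ofReal_lt_top)]
  refine integral_congr_ae (ae_of_all _ fun x => ?_)
  simp only [expNegNNReal_apply, smul_eq_mul, ENNReal.toReal_ofReal (Real.exp_pos _).le,
    ← Real.exp_nat_mul, ← Real.exp_add]
  ring_nf

theorem MeasureTheory.Measure.ext_of_forall_integral_exp_neg_mul_eq {κ₁ κ₂ : Measure ℝ≥0}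
    (h₁ : Integrable (fun x : ℝ≥0 => Real.exp (-(x : ℝ))) κ₁)
    (h₂ : Integrable (fun x : ℝ≥0 => Real.exp (-(x : ℝ))) κ₂)
    (h : ∀ n : ℕ, ∫ x, Real.exp (-((n + 1) * (x : ℝ))) ∂κ₁ =
      ∫ x, Real.exp (-((n + 1) * (x : ℝ))) ∂κ₂) :
    κ₁ = κ₂ := by
  set w : ℝ≥0 → ℝ≥0∞ := fun x => ENNReal.ofReal (expNegNNReal x)
  have : IsFiniteMeasure (κ₁.withDensity w) := isFiniteMeasure_withDensity_ofReal h₁.2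
  have : IsFiniteMeasure (κ₂.withDensity w) := isFiniteMeasure_withDensity_ofReal h₂.2
  have hw : κ₁.withDensity w = κ₂.withDensity w :=
    ext_of_forall_integral_pow_eq _ expNegNNReal_injective fun n => by
      simp only [w, integral_expNegNNReal_pow_withDensity, h]
  have hw_ne_zero : ∀ x, w x ≠ 0 := fun x => by
    simpa [w, expNegNNReal_apply] using Real.exp_pos _
  exact (withDensity_left_inj (by fun_prop) hw_ne_zero fun _ => ENNReal.ofReal_ne_top).1 hw

theorem generalised_signed_measure_laplace_determines_general (μp μn νp νn : Measure ℝ≥0)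
    (hsingμ : μp.MutuallySingular μn) (hsingν : νp.MutuallySingular νn)
    (hintμ : ∀ l : ℝ, 0 < l →
      (∫⁻ x, ENNReal.ofReal (Real.exp (-(l * (x : ℝ)))) ∂(μp + μn)) ≠ ⊤)
    (hintν : ∀ l : ℝ, 0 < l →
      (∫⁻ x, ENNReal.ofReal (Real.exp (-(l * (x : ℝ)))) ∂(νp + νn)) ≠ ⊤)
    (hlap : ∀ l : ℝ, 0 < l →
      (∫ x, Real.exp (-(l * (x : ℝ))) ∂μp) - (∫ x, Real.exp (-(l * (x : ℝ))) ∂μn) =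
      (∫ x, Real.exp (-(l * (x : ℝ))) ∂νp) - (∫ x, Real.exp (-(l * (x : ℝ))) ∂νn)) :
    μp = νp ∧ μn = νn := by
  have integrable_of_lintegral_ne_top {κ : Measure ℝ≥0} {l : ℝ}
      (hκ : ∫⁻ x, ENNReal.ofReal (Real.exp (-(l * (x : ℝ)))) ∂κ ≠ ⊤) :
      Integrable (fun x : ℝ≥0 => Real.exp (-(l * (x : ℝ)))) κ :=
    ⟨by fun_prop, (hasFiniteIntegral_iff_ofReal (ae_of_all _ fun _ => (Real.exp_pos _).le)).2
      hκ.lt_top⟩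
  have hμ {l : ℝ} (hl : 0 < l) :=
    integrable_add_measure.1 (integrable_of_lintegral_ne_top (hintμ l hl))
  have hν {l : ℝ} (hl : 0 < l) :=
    integrable_add_measure.1 (integrable_of_lintegral_ne_top (hintν l hl))
  have hsum : μp + νn = νp + μn := by
    refine Measure.ext_of_forall_integral_exp_neg_mul_eq ?_ ?_ fun n => ?_
    · simpa using (hμ one_pos).1.add_measure (hν one_pos).2
    · simpa using (hν one_pos).1.add_measure (hμ one_pos).2
    · have hl : (0 : ℝ) < n + 1 := by positivity
      rw [integral_add_measure (hμ hl).1 (hν hl).2, integral_add_measure (hν hl).1 (hμ hl).2]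
      linarith [hlap _ hl]
  exact hsingμ.eq_of_add_eq_add hsingν hsum

/-- generalised signed Radon measures `μ = μ⁺ - μ⁻` and `ν = ν⁺ - ν⁻` on
`[0,∞)` whose variations have finite Laplace transforms on `(0,∞)` are equal as soon as
their Laplace transforms agree for all `λ > 0`. -/
theorem generalised_signed_measure_laplace_determines (μp μn νp νn : Measure ℝ≥0)
    (hRadonμp : IsLocallyFiniteMeasure μp ∧ μp.InnerRegular)
    (hRadonμn : IsLocallyFiniteMeasure μn ∧ μn.InnerRegular)
    (hRadonνp : IsLocallyFiniteMeasure νp ∧ νp.InnerRegular)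
    (hRadonνn : IsLocallyFiniteMeasure νn ∧ νn.InnerRegular)
    (hsingμ : μp.MutuallySingular μn) (hsingν : νp.MutuallySingular νn)
    (hintμ : ∀ l : ℝ, 0 < l →
      (∫⁻ x, ENNReal.ofReal (Real.exp (-(l * (x : ℝ)))) ∂(μp + μn)) ≠ ⊤)
    (hintν : ∀ l : ℝ, 0 < l →
      (∫⁻ x, ENNReal.ofReal (Real.exp (-(l * (x : ℝ)))) ∂(νp + νn)) ≠ ⊤)
    (hlap : ∀ l : ℝ, 0 < l →
      (∫ x, Real.exp (-(l * (x : ℝ))) ∂μp) - (∫ x, Real.exp (-(l * (x : ℝ))) ∂μn) =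
      (∫ x, Real.exp (-(l * (x : ℝ))) ∂νp) - (∫ x, Real.exp (-(l * (x : ℝ))) ∂νn)) :
    μp = νp ∧ μn = νn :=
  generalised_signed_measure_laplace_determines_general μp μn νp νn hsingμ hsingν hintμ hintν hlap
end

section
/- Let {μ_n} and μ be generalised signed Radon measures on [0,∞) whose variations have finite Laplace transforms on (0,∞), with limsup_n ∫ e^{−λx} |μ_n|(dx) < ∞ for all λ > 0. If the distribution functions F_{μ_n} converge to F_μ at almost every point of (0,∞), then Ψ_{μ_n}(λ) → Ψ_μ(λ) for every λ > 0. -/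
open MeasureTheory Filter Topology Set
open scoped NNReal ENNReal

/-!
Fubini turns `e^{-λt} = ∫_t^∞ λ e^{-λx} dx` into `Ψ_ν(λ) = ∫_0^∞ λ e^{-λx} F_ν(x) dx` for every
measure `ν` with finite Laplace transform at `λ`, so `Ψ_{μ_n}(λ)` and `Ψ_μ(λ)` are integrals of
`λ e^{-λx} F(x)`. Markov's inequality gives `|F_{μ_n}(x)| ≤ e^{λx/2} ∫ e^{-λt/2} |μ_n|(dt)`, and
the limsup hypothesis at `λ/2` bounds the last factor for large `n`; dominated convergence with the
integrable majorant `C e^{-λx/2}` concludes.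
-/

noncomputable def laplaceLIntegral (μ : Measure ℝ≥0) (l : ℝ) : ℝ≥0∞ :=
  ∫⁻ t, ENNReal.ofReal (Real.exp (-(l * t))) ∂μ

/-- `F_μ` on `(0, ∞)`; at `x ≤ 0` this is `μ {0}` rather than the paper's `0`. -/
noncomputable def distribFun (μ : Measure ℝ≥0) (x : ℝ) : ℝ :=
  (μ (Iic x.toNNReal)).toReal

theorem integral_Ioi_mul_exp_neg_mul {l : ℝ} (hl : 0 < l) (c : ℝ) :
    ∫ x in Ioi c, l * Real.exp (-(l * x)) = Real.exp (-(l * c)) := by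
  simp_rw [← neg_mul]
  rw [integral_const_mul, integral_exp_mul_Ioi (neg_neg_of_pos hl)]
  field_simp

theorem lintegral_Ioi_mul_exp_neg_mul {l : ℝ} (hl : 0 < l) (c : ℝ) :
    ∫⁻ x in Ioi c, ENNReal.ofReal (l * Real.exp (-(l * x))) =
      ENNReal.ofReal (Real.exp (-(l * c))) := by
  have hint : IntegrableOn (fun x => l * Real.exp (-(l * x))) (Ioi c) := by
    simpa only [IntegrableOn, neg_mul] using (exp_neg_integrableOn_Ioi c hl).const_mul l
  rw [← integral_Ioi_mul_exp_neg_mul hl c,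
    ofReal_integral_eq_lintegral_ofReal hint (ae_of_all _ fun x => by positivity)]

section

variable (μ ν : Measure ℝ≥0) {l : ℝ}

theorem laplaceLIntegral_add_measure :
    laplaceLIntegral (μ + ν) l = laplaceLIntegral μ l + laplaceLIntegral ν l :=
  lintegral_add_measure _ _ _

theorem distribFun_nonneg (x : ℝ) : 0 ≤ distribFun μ x := ENNReal.toReal_nonneg

@[fun_prop]
theorem measurable_distribFun : Measurable (distribFun μ) :=
  have hmono : Monotone fun y : ℝ≥0 => μ (Iic y) := fun _ _ hab =>
    measure_mono (Iic_subset_Iic.2 hab)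
  (hmono.measurable.comp measurable_real_toNNReal).ennreal_toReal

theorem measure_Iic_le_ofReal_exp_mul_laplaceLIntegral (hl : 0 ≤ l) (y : ℝ≥0) :
    μ (Iic y) ≤ ENNReal.ofReal (Real.exp (l * y)) * laplaceLIntegral μ l := by
  have markov : ENNReal.ofReal (Real.exp (-(l * y))) * μ (Iic y) ≤ laplaceLIntegral μ l := by
    refine le_trans (mul_le_mul_right (measure_mono fun t ht => ?_) _)
      (mul_meas_ge_le_lintegral (by fun_prop) _)
    have ht : (t : ℝ) ≤ y := ht
    exact ENNReal.ofReal_le_ofReal (Real.exp_le_exp.2 (by nlinarith))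
  calc μ (Iic y)
      = ENNReal.ofReal (Real.exp (l * y)) *
          (ENNReal.ofReal (Real.exp (-(l * y))) * μ (Iic y)) := by
        rw [← mul_assoc, ← ENNReal.ofReal_mul (Real.exp_pos _).le, ← Real.exp_add,
          add_neg_cancel, Real.exp_zero, ENNReal.ofReal_one, one_mul]
    _ ≤ _ := mul_le_mul_right markov _

variable {μ}

theorem measure_Iic_ne_top (hl : 0 ≤ l) (h : laplaceLIntegral μ l ≠ ∞) (y : ℝ≥0) :
    μ (Iic y) ≠ ∞ :=
  ne_top_of_le_ne_top (ENNReal.mul_ne_top ENNReal.ofReal_ne_top h)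
    (measure_Iic_le_ofReal_exp_mul_laplaceLIntegral μ hl y)

theorem distribFun_le (hl : 0 ≤ l) (h : laplaceLIntegral μ l ≠ ∞) {x : ℝ} (hx : 0 ≤ x) :
    distribFun μ x ≤ Real.exp (l * x) * (laplaceLIntegral μ l).toReal := by
  have key := ENNReal.toReal_mono (ENNReal.mul_ne_top ENNReal.ofReal_ne_top h)
    (measure_Iic_le_ofReal_exp_mul_laplaceLIntegral μ hl x.toNNReal)
  rwa [ENNReal.toReal_mul, ENNReal.toReal_ofReal (Real.exp_pos _).le,
    Real.coe_toNNReal x hx] at key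

theorem sigmaFinite_of_laplaceLIntegral_ne_top (hl : 0 ≤ l) (h : laplaceLIntegral μ l ≠ ∞) :
    SigmaFinite μ :=
  ⟨⟨{ set := fun n => Iic (n : ℝ≥0)
      set_mem _ := trivial
      finite _ := (measure_Iic_ne_top hl h _).lt_top
      spanning := eq_univ_of_forall fun y => mem_iUnion.2 ⟨⌈y⌉₊, Nat.le_ceil y⟩ }⟩⟩

theorem laplaceLIntegral_eq_lintegral_mul_measure_Iic [SFinite μ] (hl : 0 < l) :
    laplaceLIntegral μ l =
      ∫⁻ x in Ioi (0 : ℝ), ENNReal.ofReal (l * Real.exp (-(l * x))) * μ (Iic x.toNNReal) := by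
  set g : ℝ → ℝ≥0∞ := fun x => ENNReal.ofReal (l * Real.exp (-(l * x)))
  have hg : Measurable g := by fun_prop
  have inner (t : ℝ≥0) :
      ENNReal.ofReal (Real.exp (-(l * t))) =
        ∫⁻ x in Ioi (0 : ℝ), (Ici (t : ℝ)).indicator g x := by
    rw [lintegral_indicator measurableSet_Ici, Measure.restrict_restrict measurableSet_Ici,
      ← lintegral_Ioi_mul_exp_neg_mul hl]
    refine setLIntegral_congr ?_
    exact (EventuallyEq.of_eq (inter_eq_left.2 (Ioi_subset_Ioi t.2)).symm).trans
      (Ioi_ae_eq_Ici.inter (ae_eq_refl _))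
  have outer (x : ℝ) (hx : x ∈ Ioi (0 : ℝ)) :
      ∫⁻ t, (Ici (t : ℝ)).indicator g x ∂μ = g x * μ (Iic x.toNNReal) := by
    have : (fun t : ℝ≥0 => (Ici (t : ℝ)).indicator g x) =
        (Iic x.toNNReal).indicator fun _ => g x := by
      ext t
      simp [indicator_apply, Real.le_toNNReal_iff_coe_le (le_of_lt hx)]
    rw [this, lintegral_indicator_const measurableSet_Iic]
  have hmeas : Measurable fun p : ℝ≥0 × ℝ => (Ici (p.1 : ℝ)).indicator g p.2 :=
    (hg.comp measurable_snd).indicator (measurableSet_le (by fun_prop) measurable_snd)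
  calc laplaceLIntegral μ l
      = ∫⁻ t, (∫⁻ x in Ioi (0 : ℝ), (Ici (t : ℝ)).indicator g x) ∂μ :=
        lintegral_congr inner
    _ = ∫⁻ x in Ioi (0 : ℝ), ∫⁻ t, (Ici (t : ℝ)).indicator g x ∂μ :=
      lintegral_lintegral_swap hmeas.aemeasurable
    _ = _ := setLIntegral_congr_fun measurableSet_Ioi outer

theorem lintegral_ofReal_mul_distribFun (hl : 0 < l) (h : laplaceLIntegral μ l ≠ ∞) :
    ∫⁻ x in Ioi (0 : ℝ), ENNReal.ofReal (l * Real.exp (-(l * x)) * distribFun μ x) =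
      laplaceLIntegral μ l := by
  have := sigmaFinite_of_laplaceLIntegral_ne_top hl.le h
  rw [laplaceLIntegral_eq_lintegral_mul_measure_Iic hl]
  refine lintegral_congr fun x => ?_
  rw [ENNReal.ofReal_mul (by positivity), distribFun,
    ENNReal.ofReal_toReal (measure_Iic_ne_top hl.le h _)]

theorem integrableOn_mul_distribFun (hl : 0 < l) (h : laplaceLIntegral μ l ≠ ∞) :
    IntegrableOn (fun x => l * Real.exp (-(l * x)) * distribFun μ x) (Ioi 0) := by
  refine ⟨Measurable.aestronglyMeasurable (by fun_prop), ?_⟩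
  rw [hasFiniteIntegral_iff_ofReal
      (ae_of_all _ fun x => mul_nonneg (by positivity) (distribFun_nonneg μ x)),
    lintegral_ofReal_mul_distribFun hl h]
  exact h.lt_top

theorem integral_exp_neg_mul_eq_integral_mul_distribFun (hl : 0 < l)
    (h : laplaceLIntegral μ l ≠ ∞) :
    ∫ t, Real.exp (-(l * t)) ∂μ =
      ∫ x in Ioi (0 : ℝ), l * Real.exp (-(l * x)) * distribFun μ x := by
  rw [integral_eq_lintegral_of_nonneg_ae (ae_of_all _ fun _ => (Real.exp_pos _).le)
      (Continuous.aestronglyMeasurable (by fun_prop)),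
    integral_eq_lintegral_of_nonneg_ae
      (ae_of_all _ fun x => mul_nonneg (by positivity) (distribFun_nonneg μ x))
      (Measurable.aestronglyMeasurable (by fun_prop)),
    lintegral_ofReal_mul_distribFun hl h]
  rfl

variable {ν}

theorem integral_exp_neg_mul_sub_eq (hl : 0 < l) (h : laplaceLIntegral (μ + ν) l ≠ ∞) :
    ∫ t, Real.exp (-(l * t)) ∂μ - ∫ t, Real.exp (-(l * t)) ∂ν =
      ∫ x in Ioi (0 : ℝ), l * Real.exp (-(l * x)) * (distribFun μ x - distribFun ν x) := by
  rw [laplaceLIntegral_add_measure, ENNReal.add_ne_top] at h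
  simp_rw [mul_sub]
  rw [integral_sub (integrableOn_mul_distribFun hl h.1) (integrableOn_mul_distribFun hl h.2),
    integral_exp_neg_mul_eq_integral_mul_distribFun hl h.1,
    integral_exp_neg_mul_eq_integral_mul_distribFun hl h.2]

theorem abs_distribFun_sub_le (hl : 0 ≤ l) (h : laplaceLIntegral (μ + ν) l ≠ ∞) {x : ℝ}
    (hx : 0 ≤ x) :
    |distribFun μ x - distribFun ν x| ≤
      Real.exp (l * x) * (laplaceLIntegral (μ + ν) l).toReal := by
  have hfin : μ (Iic x.toNNReal) ≠ ∞ ∧ ν (Iic x.toNNReal) ≠ ∞ :=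
    ENNReal.add_ne_top.1 (measure_Iic_ne_top hl h x.toNNReal)
  calc |distribFun μ x - distribFun ν x|
      ≤ distribFun μ x + distribFun ν x := by
        rw [abs_le]
        constructor <;> linarith [distribFun_nonneg μ x, distribFun_nonneg ν x]
    _ = distribFun (μ + ν) x := by
        rw [distribFun, distribFun, distribFun, Measure.add_apply,
          ENNReal.toReal_add hfin.1 hfin.2]
    _ ≤ _ := distribFun_le hl h hx

end

theorem tendsto_integral_mul_distribFun_sub {p q : ℕ → Measure ℝ≥0} {P Q : Measure ℝ≥0}
    {l : ℝ} {C : ℝ≥0∞} (hl : 0 < l) (hC : C ≠ ∞)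
    (hbound : ∀ᶠ n in atTop, laplaceLIntegral (p n + q n) (l / 2) ≤ C)
    (hconv : ∀ᵐ x ∂(volume.restrict (Ioi (0 : ℝ))),
      Tendsto (fun n => distribFun (p n) x - distribFun (q n) x) atTop
        (𝓝 (distribFun P x - distribFun Q x))) :
    Tendsto (fun n => ∫ x in Ioi (0 : ℝ),
        l * Real.exp (-(l * x)) * (distribFun (p n) x - distribFun (q n) x)) atTop
      (𝓝 (∫ x in Ioi (0 : ℝ), l * Real.exp (-(l * x)) * (distribFun P x - distribFun Q x))) := by
  refine tendsto_integral_filter_of_dominated_convergence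
    (fun x => l * C.toReal * Real.exp (-(l / 2) * x))
    (Eventually.of_forall fun n => Measurable.aestronglyMeasurable (by fun_prop)) ?_
    ((exp_neg_integrableOn_Ioi 0 (half_pos hl)).const_mul _)
    (hconv.mono fun x hx => hx.const_mul _)
  filter_upwards [hbound] with n hn
  filter_upwards [ae_restrict_mem measurableSet_Ioi] with x hx
  have hx : 0 ≤ x := le_of_lt hx
  calc ‖l * Real.exp (-(l * x)) * (distribFun (p n) x - distribFun (q n) x)‖
      = l * Real.exp (-(l * x)) * |distribFun (p n) x - distribFun (q n) x| := by
        rw [Real.norm_eq_abs, abs_mul, abs_of_pos (by positivity)]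
    _ ≤ l * Real.exp (-(l * x)) * (Real.exp (l / 2 * x) * C.toReal) := by
        gcongr
        exact (abs_distribFun_sub_le (half_pos hl).le (ne_top_of_le_ne_top hC hn) hx).trans
          (mul_le_mul_of_nonneg_left (ENNReal.toReal_mono hC hn) (Real.exp_pos _).le)
    _ = l * C.toReal * Real.exp (-(l / 2) * x) := by
        rw [mul_comm (Real.exp _) C.toReal, mul_mul_mul_comm, ← Real.exp_add]
        ring_nf

theorem continuity_theorem_part_b_general (p q : ℕ → Measure ℝ≥0) (P Q : Measure ℝ≥0)
    (hfinμ : ∀ l : ℝ, 0 < l →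
      (∫⁻ x, ENNReal.ofReal (Real.exp (-(l * (x : ℝ)))) ∂(P + Q)) ≠ ⊤)
    (hbdd : ∀ l : ℝ, 0 < l →
      Filter.limsup
        (fun n => ∫⁻ x, ENNReal.ofReal (Real.exp (-(l * (x : ℝ)))) ∂(p n + q n)) atTop < ⊤)
    (hFconv : ∀ᵐ (x : ℝ) ∂(volume.restrict (Set.Ioi (0 : ℝ))),
      Tendsto (fun n =>
          ((p n) (Set.Iic x.toNNReal)).toReal - ((q n) (Set.Iic x.toNNReal)).toReal)
        atTop
        (𝓝 ((P (Set.Iic x.toNNReal)).toReal - (Q (Set.Iic x.toNNReal)).toReal))) :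
    ∀ l : ℝ, 0 < l →
      Tendsto (fun n =>
          (∫ x, Real.exp (-(l * (x : ℝ))) ∂(p n)) - ∫ x, Real.exp (-(l * (x : ℝ))) ∂(q n))
        atTop
        (𝓝 ((∫ x, Real.exp (-(l * (x : ℝ))) ∂P) - ∫ x, Real.exp (-(l * (x : ℝ))) ∂Q)) := by
  intro l hl
  have hfin_n : ∀ᶠ n in atTop, laplaceLIntegral (p n + q n) l ≠ ∞ :=
    (eventually_lt_of_limsup_lt (hbdd l hl)).mono fun _ => LT.lt.ne
  have hbdd_half : limsup (fun n => laplaceLIntegral (p n + q n) (l / 2)) atTop < ∞ :=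
    hbdd (l / 2) (half_pos hl)
  set C := limsup (fun n => laplaceLIntegral (p n + q n) (l / 2)) atTop + 1
  have hbound : ∀ᶠ n in atTop, laplaceLIntegral (p n + q n) (l / 2) ≤ C :=
    (eventually_lt_of_limsup_lt (ENNReal.lt_add_right hbdd_half.ne one_ne_zero)).mono
      fun _ => le_of_lt
  have hC : C ≠ ∞ := ENNReal.add_ne_top.2 ⟨hbdd_half.ne, ENNReal.one_ne_top⟩
  rw [integral_exp_neg_mul_sub_eq hl (hfinμ l hl)]
  refine (tendsto_integral_mul_distribFun_sub hl hC hbound hFconv).congr' ?_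
  filter_upwards [hfin_n] with n hn
  exact (integral_exp_neg_mul_sub_eq hl hn).symm

/-- Continuity theorem, part (b). Let `μ_n = p n - q n` and `μ = P - Q` be
generalised signed Radon measures on `[0,∞)` whose variations have finite Laplace
transforms on `(0,∞)`, with `limsup_n ∫ e^{-λx} |μ_n|(dx) < ∞` for all `λ > 0`. If the
distribution functions `F_{μ_n}` converge to `F_μ` at (Lebesgue) almost every point of
`(0,∞)`, then `Ψ_{μ_n}(λ) → Ψ_μ(λ)` for every `λ > 0`. -/
theorem continuity_theorem_part_b (p q : ℕ → Measure ℝ≥0) (P Q : Measure ℝ≥0)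
    (hsing : ∀ n, (p n).MutuallySingular (q n)) (hsingμ : P.MutuallySingular Q)
    (hRadon : ∀ n, (IsLocallyFiniteMeasure (p n) ∧ (p n).InnerRegular) ∧
      (IsLocallyFiniteMeasure (q n) ∧ (q n).InnerRegular))
    (hRadonμ : (IsLocallyFiniteMeasure P ∧ P.InnerRegular) ∧
      (IsLocallyFiniteMeasure Q ∧ Q.InnerRegular))
    (hfin : ∀ n, ∀ l : ℝ, 0 < l →
      (∫⁻ x, ENNReal.ofReal (Real.exp (-(l * (x : ℝ)))) ∂(p n + q n)) ≠ ⊤)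
    (hfinμ : ∀ l : ℝ, 0 < l →
      (∫⁻ x, ENNReal.ofReal (Real.exp (-(l * (x : ℝ)))) ∂(P + Q)) ≠ ⊤)
    (hbdd : ∀ l : ℝ, 0 < l →
      Filter.limsup
        (fun n => ∫⁻ x, ENNReal.ofReal (Real.exp (-(l * (x : ℝ)))) ∂(p n + q n)) atTop < ⊤)
    (hFconv : ∀ᵐ (x : ℝ) ∂(volume.restrict (Set.Ioi (0 : ℝ))),
      Tendsto (fun n =>
          ((p n) (Set.Iic x.toNNReal)).toReal - ((q n) (Set.Iic x.toNNReal)).toReal)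
        atTop
        (𝓝 ((P (Set.Iic x.toNNReal)).toReal - (Q (Set.Iic x.toNNReal)).toReal))) :
    ∀ l : ℝ, 0 < l →
      Tendsto (fun n =>
          (∫ x, Real.exp (-(l * (x : ℝ))) ∂(p n)) - ∫ x, Real.exp (-(l * (x : ℝ))) ∂(q n))
        atTop
        (𝓝 ((∫ x, Real.exp (-(l * (x : ℝ))) ∂P) - ∫ x, Real.exp (-(l * (x : ℝ))) ∂Q)) :=
  continuity_theorem_part_b_general p q P Q hfinμ hbdd hFconv
end

section
/- Let x > 0 and define the signed measures μ_n := δ_x − δ_{x+1/n} on [0,∞) and μ := 0. Then (i) Ψ_{μ_n}(λ) → 0 = Ψ_μ(λ) for all λ > 0; (ii) limsup_n Ψ_{|μ_n|}(λ) = 2e^{−λx} < ∞ for all λ > 0; (iii) x is a continuity point of μ; but (iv) F_{μ_n}(x) = 1 for all n, so F_{μ_n}(x) does not converge to F_μ(x) = 0. Moreover {μ_n} is not right-equicontinuous at x: for any δ > 0 and n ≥ 1/δ, |μ_n((x, x+δ])| = 1. -/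
/-! The atom `x + 1/n` tends to `x`, so integrals of the continuous kernel `y ↦ e^{-λy}` against
`δ_{x+1/n}` converge to those against `δ_x`; yet this atom always lies strictly to the right of
`x`, hence outside `[0, x]` and, once `1/n ≤ δ`, inside `(x, x + δ]`. -/

open MeasureTheory Filter Topology Set
open scoped NNReal ENNReal

namespace NNReal

lemma tendsto_add_inv_natCast_atTop (x : ℝ≥0) :
    Tendsto (fun n : ℕ => x + (n : ℝ≥0)⁻¹) atTop (𝓝 x) := by
  simpa using tendsto_const_nhds.add (tendsto_inv_atTop_nhds_zero_nat (𝕜 := ℝ≥0))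

lemma add_inv_natCast_notMem_Iic (x : ℝ≥0) {n : ℕ} (hn : n ≠ 0) :
    x + (n : ℝ≥0)⁻¹ ∉ Iic x := by
  simpa using hn

lemma add_inv_natCast_mem_Ioc {x δ : ℝ≥0} {n : ℕ} (hδ : 0 < δ)
    (hn : 1 / (δ : ℝ) ≤ n) :
    x + (n : ℝ≥0)⁻¹ ∈ Ioc x (x + δ) := by
  have hn_pos : (0 : ℝ) < n := (one_div_pos.2 (coe_pos.2 hδ)).trans_le hn
  refine ⟨lt_add_of_pos_right x (by simpa using hn_pos), add_le_add_right ?_ x⟩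
  rw [← coe_le_coe, NNReal.coe_inv, NNReal.coe_natCast]
  exact inv_le_of_inv_le₀ (coe_pos.2 hδ) (by simpa using hn)

end NNReal

namespace MeasureTheory.Measure

variable {α : Type*} [MeasurableSpace α] [MeasurableSingletonClass α]

lemma dirac_apply_of_notMem {a : α} {s : Set α} (h : a ∉ s) : dirac a s = 0 := by
  rw [dirac_apply, indicator_of_notMem h]

lemma integral_dirac_add_dirac {E : Type*} [NormedAddCommGroup E] [NormedSpace ℝ E]
    [CompleteSpace E] (f : α → E) (a b : α) :
    ∫ y, f y ∂(dirac a + dirac b) = f a + f b := by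
  rw [integral_add_measure (integrable_dirac enorm_lt_top) (integrable_dirac enorm_lt_top),
    integral_dirac, integral_dirac]

end MeasureTheory.Measure

theorem dirac_counterexample_general (x : ℝ≥0) :
    (∀ l : ℝ, 0 < l →
      Tendsto (fun n : ℕ =>
          (∫ y, Real.exp (-(l * (y : ℝ))) ∂(Measure.dirac x)) -
            ∫ y, Real.exp (-(l * (y : ℝ))) ∂(Measure.dirac (x + (n : ℝ≥0)⁻¹)))
        atTop (𝓝 0)) ∧
    (∀ l : ℝ, 0 < l →
      Filter.limsup (fun n : ℕ =>
          ∫ y, Real.exp (-(l * (y : ℝ)))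
            ∂(Measure.dirac x + Measure.dirac (x + (n : ℝ≥0)⁻¹)))
        atTop = 2 * Real.exp (-(l * (x : ℝ)))) ∧
    ((0 : Measure ℝ≥0) {x} = 0) ∧
    (∀ n : ℕ, 1 ≤ n →
      ((Measure.dirac x) (Set.Iic x)).toReal -
        ((Measure.dirac (x + (n : ℝ≥0)⁻¹)) (Set.Iic x)).toReal = 1) ∧
    ¬ Tendsto (fun n : ℕ =>
        ((Measure.dirac x) (Set.Iic x)).toReal -
          ((Measure.dirac (x + (n : ℝ≥0)⁻¹)) (Set.Iic x)).toReal) atTop (𝓝 0) ∧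
    (∀ δ : ℝ≥0, 0 < δ → ∀ n : ℕ, 1 / (δ : ℝ) ≤ (n : ℝ) →
      |((Measure.dirac x) (Set.Ioc x (x + δ))).toReal -
        ((Measure.dirac (x + (n : ℝ≥0)⁻¹)) (Set.Ioc x (x + δ))).toReal| = 1) := by
  have laplace_tendsto (l : ℝ) :
      Tendsto (fun n : ℕ => Real.exp (-(l * (x + (n : ℝ≥0)⁻¹ : ℝ≥0)))) atTop
        (𝓝 (Real.exp (-(l * x)))) :=
    ((by fun_prop : Continuous fun y : ℝ≥0 => Real.exp (-(l * y))).tendsto x).comp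
      (NNReal.tendsto_add_inv_natCast_atTop x)
  have cdf_eq_one (n : ℕ) (hn : 1 ≤ n) : (Measure.dirac x (Iic x)).toReal -
      (Measure.dirac (x + (n : ℝ≥0)⁻¹) (Iic x)).toReal = 1 := by
    rw [Measure.dirac_apply_of_mem self_mem_Iic,
      Measure.dirac_apply_of_notMem (NNReal.add_inv_natCast_notMem_Iic x (by omega))]
    simp
  refine ⟨fun l _ => ?_, fun l _ => ?_, rfl, cdf_eq_one, fun h => ?_, fun δ hδ n hn => ?_⟩
  · simp only [integral_dirac]
    simpa using (tendsto_const_nhds (x := Real.exp (-(l * x)))).sub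
      (laplace_tendsto l)
  · simp only [Measure.integral_dirac_add_dirac]
    rw [two_mul]
    exact (tendsto_const_nhds.add (laplace_tendsto l)).limsup_eq
  · have : Tendsto (fun _ : ℕ => (1 : ℝ)) atTop (𝓝 0) :=
      h.congr' ((eventually_ge_atTop 1).mono cdf_eq_one)
    exact one_ne_zero (tendsto_nhds_unique tendsto_const_nhds this)
  · rw [Measure.dirac_apply_of_notMem (by simp),
      Measure.dirac_apply_of_mem (NNReal.add_inv_natCast_mem_Ioc hδ hn)]
    simp

/-- for `x > 0` and `μ_n := δ_x - δ_{x+1/n}`, `μ := 0`: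
(i) `Ψ_{μ_n}(λ) → 0 = Ψ_μ(λ)`; (ii) `limsup_n Ψ_{|μ_n|}(λ) = 2 e^{-λx}`;
(iii) `x` is a continuity point of `μ = 0`; but (iv) `F_{μ_n}(x) = 1` for `n ≥ 1`, so
`F_{μ_n}(x) ↛ 0 = F_μ(x)`; moreover `{μ_n}` is not right-equicontinuous at `x`:
`|μ_n((x, x+δ])| = 1` whenever `n ≥ 1/δ`. -/
theorem dirac_counterexample (x : ℝ≥0) (hx : 0 < x) :
    (∀ l : ℝ, 0 < l →
      Tendsto (fun n : ℕ =>
          (∫ y, Real.exp (-(l * (y : ℝ))) ∂(Measure.dirac x)) -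
            ∫ y, Real.exp (-(l * (y : ℝ))) ∂(Measure.dirac (x + (n : ℝ≥0)⁻¹)))
        atTop (𝓝 0)) ∧
    (∀ l : ℝ, 0 < l →
      Filter.limsup (fun n : ℕ =>
          ∫ y, Real.exp (-(l * (y : ℝ)))
            ∂(Measure.dirac x + Measure.dirac (x + (n : ℝ≥0)⁻¹)))
        atTop = 2 * Real.exp (-(l * (x : ℝ)))) ∧
    ((0 : Measure ℝ≥0) {x} = 0) ∧
    (∀ n : ℕ, 1 ≤ n →
      ((Measure.dirac x) (Set.Iic x)).toReal -
        ((Measure.dirac (x + (n : ℝ≥0)⁻¹)) (Set.Iic x)).toReal = 1) ∧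
    ¬ Tendsto (fun n : ℕ =>
        ((Measure.dirac x) (Set.Iic x)).toReal -
          ((Measure.dirac (x + (n : ℝ≥0)⁻¹)) (Set.Iic x)).toReal) atTop (𝓝 0) ∧
    (∀ δ : ℝ≥0, 0 < δ → ∀ n : ℕ, 1 / (δ : ℝ) ≤ (n : ℝ) →
      |((Measure.dirac x) (Set.Ioc x (x + δ))).toReal -
        ((Measure.dirac (x + (n : ℝ≥0)⁻¹)) (Set.Ioc x (x + δ))).toReal| = 1) :=
  dirac_counterexample_general x
end

section
/- Let {μ_n} be a sequence of signed measures on [0,∞) with Laplace transforms finite on (0,∞), and suppose Ψ_{μ_n}(λ) → Ψ_μ(λ) for all λ > 0 for some μ with finite Laplace transform. If there exists δ ∈ [0,1) such that Ψ_{μ_n^−}(λ) ≤ δ Ψ_{μ_n^+}(λ) for all λ > 0 and all n, then limsup_n Ψ_{|μ_n|}(λ) ≤ ((1+δ)/(1−δ)) Ψ_μ(λ) < ∞ for every λ > 0. -/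
open MeasureTheory Filter Topology Set
open scoped NNReal ENNReal

/-- if signed measures `μ_n = p n - q n` (Jordan decomposition) have
Laplace transforms converging to `Ψ_μ` and there is `δ ∈ [0,1)` with
`Ψ_{μ_n⁻}(λ) ≤ δ Ψ_{μ_n⁺}(λ)` for all `λ > 0` and all `n`, then
`limsup_n Ψ_{|μ_n|}(λ) ≤ ((1+δ)/(1-δ)) Ψ_μ(λ) < ∞` for every `λ > 0`. -/
theorem sufficient_condition_boundedness (p q : ℕ → Measure ℝ≥0) (P Q : Measure ℝ≥0)
    (hsing : ∀ n, (p n).MutuallySingular (q n)) (hsingμ : P.MutuallySingular Q)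
    (hint : ∀ n, ∀ l : ℝ, 0 < l →
      Integrable (fun x : ℝ≥0 => Real.exp (-(l * (x : ℝ)))) (p n + q n))
    (hintμ : ∀ l : ℝ, 0 < l →
      Integrable (fun x : ℝ≥0 => Real.exp (-(l * (x : ℝ)))) (P + Q))
    (hconv : ∀ l : ℝ, 0 < l →
      Tendsto (fun n =>
          (∫ x, Real.exp (-(l * (x : ℝ))) ∂(p n)) - ∫ x, Real.exp (-(l * (x : ℝ))) ∂(q n))
        atTop
        (𝓝 ((∫ x, Real.exp (-(l * (x : ℝ))) ∂P) - ∫ x, Real.exp (-(l * (x : ℝ))) ∂Q)))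
    (δ : ℝ) (hδ0 : 0 ≤ δ) (hδ1 : δ < 1)
    (hdom : ∀ n, ∀ l : ℝ, 0 < l →
      (∫ x, Real.exp (-(l * (x : ℝ))) ∂(q n)) ≤ δ * ∫ x, Real.exp (-(l * (x : ℝ))) ∂(p n)) :
    ∀ l : ℝ, 0 < l →
      Filter.limsup (fun n => ∫ x, Real.exp (-(l * (x : ℝ))) ∂(p n + q n)) atTop ≤
        ((1 + δ) / (1 - δ)) *
          ((∫ x, Real.exp (-(l * (x : ℝ))) ∂P) - ∫ x, Real.exp (-(l * (x : ℝ))) ∂Q) := by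
  intro l hl
  set f : ℝ≥0 → ℝ := fun x : ℝ≥0 => Real.exp (-(l * (x : ℝ))) with hf
  have hδ' : 0 < 1 - δ := by linarith
  set c : ℝ := (1 + δ) / (1 - δ) with hc
  set a : ℕ → ℝ := fun n => ∫ x, f x ∂(p n) with ha
  set b : ℕ → ℝ := fun n => ∫ x, f x ∂(q n) with hb
  have hsum : ∀ n, (∫ x, f x ∂(p n + q n)) = a n + b n := by
    intro n
    have h := (integrable_add_measure.mp (hint n l hl))
    exact integral_add_measure h.1 h.2
  have hb0 : ∀ n, 0 ≤ b n := fun n =>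
    integral_nonneg (fun x => (Real.exp_pos _).le)
  have key : ∀ n, a n + b n ≤ c * (a n - b n) := by
    intro n
    have hd := hdom n l hl
    rw [hc, div_mul_eq_mul_div, le_div_iff₀ hδ']
    nlinarith [hb0 n]
  have hlim : Tendsto (fun n => c * (a n - b n)) atTop
      (𝓝 (c * ((∫ x, f x ∂P) - ∫ x, f x ∂Q))) :=
    (hconv l hl).const_mul c
  calc Filter.limsup (fun n => ∫ x, f x ∂(p n + q n)) atTop
      ≤ Filter.limsup (fun n => c * (a n - b n)) atTop := by
        apply Filter.limsup_le_limsup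
        · exact Filter.Eventually.of_forall fun n => by
            show (∫ x, f x ∂(p n + q n)) ≤ c * (a n - b n)
            rw [hsum n]; exact key n
        · refine IsBoundedUnder.isCoboundedUnder_le (isBoundedUnder_of ⟨0, fun n => ?_⟩)
          show (0:ℝ) ≤ ∫ x, f x ∂(p n + q n)
          rw [hsum n]
          have : 0 ≤ a n := integral_nonneg (fun x => (Real.exp_pos _).le)
          linarith [hb0 n]
        · exact hlim.isBoundedUnder_le
    _ = c * ((∫ x, f x ∂P) - ∫ x, f x ∂Q) := hlim.limsup_eq
end

section
/- Karamata's Abelian theorem: let μ be a positive Radon measure on [0,∞) with Ψ_μ(λ) := ∫ e^{−λx} μ(dx) < ∞ for all λ > 0, and let ρ ≥ 0. If F_μ(tx)/F_μ(t) → x^ρ as t → ∞ for every x > 0 (with F_μ(t) > 0 for large t), then Ψ_μ(τλ)/Ψ_μ(τ) → λ^{−ρ} as τ ↓ 0 for every λ > 0, and Ψ_μ(1/t) ∼ Γ(ρ+1) F_μ(t) as t → ∞. -/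
open MeasureTheory Filter Topology Set
open scoped NNReal ENNReal

/-!
Fubini turns the Laplace transform into an integral of the distribution function:
`Ψ(1/t) = ∫₀^∞ e^{-u} F(tu) du`, so `Ψ(1/t)/F(t) = ∫₀^∞ e^{-u} F(tu)/F(t) du`. Regular variation
gives pointwise convergence of the integrand to `e^{-u} u^ρ`, whose integral is `Γ(ρ+1)`. For
domination, `F(2t) ≤ 2^{ρ+1} F(t)` for large `t`; iterating this doubling bound along dyadic scales
gives the Potter-type bound `F(tu)/F(t) ≤ 1 + 2^{ρ+1} u^{ρ+1}`, integrable against `e^{-u}`, so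
dominated convergence applies. Finally `Ψ(1/t) ∼ Γ(ρ+1) F(t)` transfers the regular variation of
`F` at infinity to that of `Ψ` at zero.
-/

theorem lintegral_Ici_exp_neg (c : ℝ) :
    ∫⁻ u in Ici c, ENNReal.ofReal (Real.exp (-u)) = ENNReal.ofReal (Real.exp (-c)) := by
  have hint : IntegrableOn (fun u => Real.exp (-u)) (Ioi c) := by
    simpa only [neg_one_mul] using exp_neg_integrableOn_Ioi c one_pos
  rw [← setLIntegral_congr Ioi_ae_eq_Ici, ← ofReal_integral_eq_lintegral_ofReal hint
    (.of_forall fun _ => (Real.exp_pos _).le), integral_exp_neg_Ioi]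

theorem lintegral_exp_neg_mul_eq_lintegral_measure_Iic (μ : Measure ℝ≥0) [SFinite μ] {l : ℝ}
    (hl : 0 < l) :
    ∫⁻ x, ENNReal.ofReal (Real.exp (-(l * x))) ∂μ =
      ∫⁻ u in Ioi 0, ENNReal.ofReal (Real.exp (-u)) * μ (Iic (u / l).toNNReal) := by
  set g : ℝ → ℝ≥0∞ := fun u => ENNReal.ofReal (Real.exp (-u))
  set S : Set (ℝ≥0 × ℝ) := {p | l * p.1 ≤ p.2}
  have hS : MeasurableSet S := measurableSet_le (by fun_prop) measurable_snd
  have hg : Measurable g := by fun_prop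
  calc ∫⁻ x, g (l * x) ∂μ
      = ∫⁻ x, (∫⁻ u : ℝ, S.indicator (fun p => g p.2) (x, u)) ∂μ := by
        refine lintegral_congr fun x => ?_
        have h := lintegral_Ici_exp_neg (l * x)
        rw [← lintegral_indicator measurableSet_Ici] at h
        exact h.symm
    _ = ∫⁻ u : ℝ, ∫⁻ x, S.indicator (fun p => g p.2) (x, u) ∂μ :=
        lintegral_lintegral_swap (f := fun x u => S.indicator (fun p => g p.2) (x, u))
          ((hg.comp measurable_snd).indicator hS).aemeasurable
    _ = ∫⁻ u in Ici 0, g u * μ (Iic (u / l).toNNReal) := by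
        rw [← lintegral_indicator measurableSet_Ici]
        refine lintegral_congr fun u => ?_
        have hsec : (fun x => S.indicator (fun p => g p.2) (x, u)) =
            {x : ℝ≥0 | l * x ≤ u}.indicator fun _ => g u := rfl
        rw [hsec, lintegral_indicator_const (measurableSet_le (by fun_prop) measurable_const)]
        rcases le_or_gt 0 u with hu | hu
        · rw [indicator_of_mem (mem_Ici.2 hu)]
          congr 2
          ext x
          simp [Real.le_toNNReal_iff_coe_le (div_nonneg hu hl.le), le_div_iff₀' hl]
        · rw [indicator_of_notMem (by simpa using hu)]
          have : {x : ℝ≥0 | l * x ≤ u} = ∅ :=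
            eq_empty_of_forall_notMem fun x hx => (mul_nonneg hl.le x.2).not_gt (hx.trans_lt hu)
          simp [this]
    _ = _ := setLIntegral_congr Ioi_ae_eq_Ici.symm

theorem measure_Iic_ne_top_s12 {α : Type*} [TopologicalSpace α] [LinearOrder α] [OrderBot α]
    [CompactIccSpace α] [MeasurableSpace α] (μ : Measure α) [IsLocallyFiniteMeasure μ] (t : α) :
    μ (Iic t) ≠ ∞ := by
  rw [← Icc_bot]
  exact isCompact_Icc.measure_ne_top

theorem toReal_lintegral_exp_neg_one_div_mul (μ : Measure ℝ≥0) [IsLocallyFiniteMeasure μ]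
    {t : ℝ≥0} (ht : 0 < t) :
    (∫⁻ x, ENNReal.ofReal (Real.exp (-(1 / (t : ℝ) * x))) ∂μ).toReal =
      ∫ u in Ioi 0, Real.exp (-u) * (μ (Iic (t * u.toNNReal))).toReal := by
  have hmono : Monotone fun u : ℝ => μ (Iic (u / (1 / (t : ℝ))).toNNReal) := fun a b hab =>
    measure_mono (Iic_subset_Iic.2 (Real.toNNReal_mono (by gcongr)))
  have hmeas : AEMeasurable (fun u : ℝ => ENNReal.ofReal (Real.exp (-u)) *
      μ (Iic (u / (1 / (t : ℝ))).toNNReal)) (volume.restrict (Ioi 0)) :=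
    ((by fun_prop : Measurable fun u : ℝ => ENNReal.ofReal (Real.exp (-u))).mul
      hmono.measurable).aemeasurable
  rw [lintegral_exp_neg_mul_eq_lintegral_measure_Iic μ (by positivity), ← integral_toReal hmeas
    (.of_forall fun u => ENNReal.mul_lt_top ENNReal.ofReal_lt_top
      (measure_Iic_ne_top_s12 μ _).lt_top)]
  refine setIntegral_congr_fun measurableSet_Ioi fun u _ => ?_
  rw [ENNReal.toReal_mul, ENNReal.toReal_ofReal (Real.exp_pos _).le, one_div, div_inv_eq_mul,
    mul_comm u, Real.toNNReal_mul t.coe_nonneg, Real.toNNReal_coe]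

theorem integrableOn_exp_neg_mul_rpow {p : ℝ} (hp : -1 < p) :
    IntegrableOn (fun u => Real.exp (-u) * u ^ p) (Ioi 0) := by
  simpa using Real.GammaIntegral_convergent (s := p + 1) (by linarith)

theorem integrableOn_exp_neg_mul_one_add_rpow {p : ℝ} (hp : -1 < p) (c : ℝ) :
    IntegrableOn (fun u => Real.exp (-u) * (1 + c * u ^ p)) (Ioi 0) := by
  have h0 : IntegrableOn (fun u : ℝ => Real.exp (-u)) (Ioi 0) := by
    simpa using integrableOn_exp_neg_mul_rpow neg_one_lt_zero
  exact (h0.add ((integrableOn_exp_neg_mul_rpow hp).const_mul c)).congr_fun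
    (fun u _ => by simp only [Pi.add_apply]; ring) measurableSet_Ioi

def RegularlyVarying (F : ℝ≥0 → ℝ) (ρ : ℝ) : Prop :=
  ∀ x : ℝ≥0, 0 < x → Tendsto (fun t : ℝ≥0 => F (t * x) / F t) atTop (𝓝 ((x : ℝ) ^ ρ))

theorem RegularlyVarying.eventually_doubling {F : ℝ≥0 → ℝ} {ρ : ℝ} (hF : RegularlyVarying F ρ)
    (hpos : ∀ᶠ t in atTop, 0 < F t) :
    ∀ᶠ t in atTop, F (t * 2) ≤ (2 : ℝ) ^ (ρ + 1) * F t := by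
  have hlt : ((2 : ℝ≥0) : ℝ) ^ ρ < (2 : ℝ) ^ (ρ + 1) := by
    push_cast
    exact Real.rpow_lt_rpow_of_exponent_lt one_lt_two (lt_add_one ρ)
  filter_upwards [hpos, (hF 2 two_pos).eventually_lt_const hlt] with t hFt hlt
  exact ((div_lt_iff₀ hFt).1 hlt).le

theorem le_rpow_mul_of_doubling {F : ℝ≥0 → ℝ} (hmono : Monotone F) {p : ℝ} (hp : 0 ≤ p)
    {T t : ℝ≥0} (hdbl : ∀ s, T ≤ s → F (s * 2) ≤ (2 : ℝ) ^ p * F s) (ht : T ≤ t)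
    (hFt : 0 ≤ F t) {v : ℝ≥0} (hv : 1 ≤ v) :
    F (t * v) ≤ (2 : ℝ) ^ p * (v : ℝ) ^ p * F t := by
  obtain ⟨n, hn⟩ := pow_unbounded_of_one_lt v one_lt_two
  induction n generalizing v with
  | zero => exact absurd hv (by simpa using hn)
  | succ n ih =>
    rcases le_or_gt v 2 with hv2 | hv2
    · have hvp : 1 ≤ (v : ℝ) ^ p := Real.one_le_rpow (by exact_mod_cast hv) hp
      calc F (t * v) ≤ F (t * 2) := hmono (mul_le_mul_right hv2 t)
        _ ≤ (2 : ℝ) ^ p * F t := hdbl t ht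
        _ ≤ (2 : ℝ) ^ p * (v : ℝ) ^ p * F t := by
          gcongr
          exact le_mul_of_one_le_right (by positivity) hvp
    · have hv' : 1 ≤ v / 2 := by rw [le_div_iff₀ two_pos]; simpa using hv2.le
      have hn' : v / 2 < 2 ^ n := by rw [div_lt_iff₀ two_pos, ← pow_succ]; exact hn
      calc F (t * v) = F (t * (v / 2) * 2) := by rw [mul_assoc, div_mul_cancel₀ v two_ne_zero]
        _ ≤ (2 : ℝ) ^ p * F (t * (v / 2)) := hdbl _ (ht.trans (le_mul_of_one_le_right' hv'))
        _ ≤ (2 : ℝ) ^ p * ((2 : ℝ) ^ p * ((v / 2 : ℝ≥0) : ℝ) ^ p * F t) := by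
          gcongr; exact ih hv' hn'
        _ = (2 : ℝ) ^ p * (v : ℝ) ^ p * F t := by
          rw [NNReal.coe_div, NNReal.coe_two, Real.div_rpow v.coe_nonneg zero_le_two]
          field_simp

theorem tendsto_integral_exp_neg_mul_div {F : ℝ≥0 → ℝ} (hmono : Monotone F) (hnonneg : 0 ≤ F)
    (hpos : ∀ᶠ t in atTop, 0 < F t) {ρ : ℝ} (hρ : -1 < ρ) (hF : RegularlyVarying F ρ) :
    Tendsto (fun t => (∫ u in Ioi 0, Real.exp (-u) * F (t * u.toNNReal)) / F t) atTop
      (𝓝 (Real.Gamma (ρ + 1))) := by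
  obtain ⟨T, hT⟩ := eventually_atTop.1 (hpos.and (hF.eventually_doubling hpos))
  have hratio (t : ℝ≥0) (ht : T ≤ t) (v : ℝ≥0) :
      F (t * v) / F t ≤ 1 + 2 ^ (ρ + 1) * (v : ℝ) ^ (ρ + 1) := by
    have hFt := (hT t ht).1
    have hterm : 0 ≤ (2 : ℝ) ^ (ρ + 1) * (v : ℝ) ^ (ρ + 1) := by positivity
    rw [div_le_iff₀ hFt]
    rcases le_total v 1 with hv | hv
    · have := hmono (mul_le_of_le_one_right' hv : t * v ≤ t)
      nlinarith
    · have := le_rpow_mul_of_doubling hmono (by linarith) (fun s hs => (hT s hs).2) ht hFt.le hv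
      nlinarith
  have hmeas (t : ℝ≥0) : AEStronglyMeasurable
      (fun u : ℝ => Real.exp (-u) * (F (t * u.toNNReal) / F t)) (volume.restrict (Ioi 0)) := by
    have hmono_u : Monotone fun u : ℝ => F (t * u.toNNReal) :=
      fun a b hab => hmono (mul_le_mul_right (Real.toNNReal_mono hab) t)
    exact (by fun_prop : Measurable fun u : ℝ => Real.exp (-u)).mul
      (hmono_u.measurable.div_const _) |>.aestronglyMeasurable
  have hdom : ∀ᶠ t in atTop, ∀ᵐ u ∂volume.restrict (Ioi 0),
      ‖Real.exp (-u) * (F (t * u.toNNReal) / F t)‖ ≤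
        Real.exp (-u) * (1 + 2 ^ (ρ + 1) * u ^ (ρ + 1)) := by
    filter_upwards [eventually_ge_atTop T] with t ht
    filter_upwards [ae_restrict_mem measurableSet_Ioi] with u hu
    rw [Real.norm_of_nonneg (mul_nonneg (Real.exp_pos _).le
      (div_nonneg (hnonneg _) (hT t ht).1.le))]
    gcongr
    simpa [Real.coe_toNNReal _ (le_of_lt hu)] using hratio t ht u.toNNReal
  have hlim : ∀ᵐ u ∂volume.restrict (Ioi 0), Tendsto
      (fun t => Real.exp (-u) * (F (t * u.toNNReal) / F t)) atTop (𝓝 (Real.exp (-u) * u ^ ρ)) := by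
    filter_upwards [ae_restrict_mem measurableSet_Ioi] with u hu
    simpa [Real.coe_toNNReal _ (le_of_lt hu)] using
      (hF u.toNNReal (Real.toNNReal_pos.2 hu)).const_mul (Real.exp (-u))
  have hΓ : ∫ u in Ioi (0 : ℝ), Real.exp (-u) * u ^ ρ = Real.Gamma (ρ + 1) := by
    simp [Real.Gamma_eq_integral (by linarith : 0 < ρ + 1)]
  rw [← hΓ]
  refine (tendsto_integral_filter_of_dominated_convergence _ (.of_forall hmeas) hdom
    (integrableOn_exp_neg_mul_one_add_rpow (by linarith) _) hlim).congr fun t => ?_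
  simp only [← integral_div, mul_div_assoc]

theorem tendsto_comp_mul_div_of_tendsto_div {F G : ℝ≥0 → ℝ} {a c : ℝ} (hc : c ≠ 0)
    (hF0 : ∀ᶠ t in atTop, F t ≠ 0) (hGF : Tendsto (fun t => G t / F t) atTop (𝓝 c))
    {x : ℝ≥0} (hx : 0 < x) (hFx : Tendsto (fun t => F (t * x) / F t) atTop (𝓝 a)) :
    Tendsto (fun t => G (t * x) / G t) atTop (𝓝 a) := by
  have hmulx : Tendsto (· * x) atTop atTop := tendsto_id.atTop_mul_const hx
  have h := ((hGF.comp hmulx).mul hFx).div hGF hc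
  rw [mul_div_cancel_left₀ a hc] at h
  refine h.congr' ?_
  filter_upwards [hmulx.eventually hF0, hF0] with t hFtx hFt
  simp only [Pi.div_apply, Function.comp_apply]
  rw [div_mul_div_cancel₀ hFtx, div_div_div_cancel_right₀ hFt]

theorem tendsto_nhdsGT_zero_of_tendsto_one_div {α : Type*} {f : ℝ → α} {L : Filter α}
    (h : Tendsto (fun t : ℝ≥0 => f (1 / t)) atTop L) : Tendsto f (𝓝[>] 0) L := by
  have hinv : Tendsto (fun τ : ℝ => τ⁻¹.toNNReal) (𝓝[>] 0) atTop :=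
    tendsto_real_toNNReal_atTop.comp tendsto_inv_nhdsGT_zero
  refine (h.comp hinv).congr' ?_
  filter_upwards [self_mem_nhdsWithin] with τ hτ
  simp [Real.coe_toNNReal _ (inv_nonneg.2 (le_of_lt hτ))]

theorem karamata_abelian_general (μ : Measure ℝ≥0)
    [IsLocallyFiniteMeasure μ]
    (Ψ : ℝ → ℝ) (hΨ : ∀ l : ℝ, Ψ l = (∫⁻ x, ENNReal.ofReal (Real.exp (-(l * (x : ℝ)))) ∂μ).toReal)
    (F : ℝ≥0 → ℝ) (hFdef : ∀ t : ℝ≥0, F t = (μ (Set.Iic t)).toReal)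
    (ρ : ℝ) (hρ : 0 ≤ ρ)
    (hpos : ∀ᶠ t : ℝ≥0 in atTop, 0 < F t)
    (hF : ∀ x : ℝ≥0, 0 < x →
      Tendsto (fun t : ℝ≥0 => F (t * x) / F t) atTop (𝓝 ((x : ℝ) ^ ρ))) :
    (∀ l : ℝ, 0 < l →
      Tendsto (fun τ : ℝ => Ψ (τ * l) / Ψ τ) (𝓝[>] 0) (𝓝 (l ^ (-ρ)))) ∧
    Tendsto (fun t : ℝ≥0 => Ψ (1 / (t : ℝ)) / (Real.Gamma (ρ + 1) * F t)) atTop (𝓝 1) := by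
  have hmono : Monotone F := fun a b hab => by
    simp only [hFdef]
    exact ENNReal.toReal_mono (measure_Iic_ne_top_s12 μ b) (measure_mono (Iic_subset_Iic.2 hab))
  have hΓ : 0 < Real.Gamma (ρ + 1) := Real.Gamma_pos_of_pos (by linarith)
  have hmain : Tendsto (fun t : ℝ≥0 => Ψ (1 / (t : ℝ)) / F t) atTop (𝓝 (Real.Gamma (ρ + 1))) := by
    refine (tendsto_integral_exp_neg_mul_div hmono (fun t => by simp [hFdef]) hpos
      (by linarith) hF).congr' ?_
    filter_upwards [eventually_gt_atTop 0] with t ht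
    simp only [hΨ, hFdef, toReal_lintegral_exp_neg_one_div_mul μ ht]
  refine ⟨fun l hl => tendsto_nhdsGT_zero_of_tendsto_one_div ?_, ?_⟩
  · have hx : 0 < l⁻¹.toNNReal := Real.toNNReal_pos.2 (inv_pos.2 hl)
    have hxl : ((l⁻¹.toNNReal : ℝ≥0) : ℝ) = l⁻¹ := Real.coe_toNNReal _ (inv_nonneg.2 hl.le)
    convert tendsto_comp_mul_div_of_tendsto_div (G := fun t => Ψ (1 / t)) hΓ.ne'
      (hpos.mono fun _ h => h.ne') hmain hx (hF _ hx) using 2 with t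
    · simp [hxl, mul_comm]
    · rw [hxl, Real.inv_rpow hl.le, Real.rpow_neg hl.le]
  · simpa [div_div, mul_comm, hΓ.ne'] using hmain.div_const (Real.Gamma (ρ + 1))

/-- Karamata's Abelian theorem. Let `μ` be a positive Radon measure on
`[0,∞)` with finite Laplace transform `Ψ_μ` on `(0,∞)` and `ρ ≥ 0`. If
`F_μ(tx)/F_μ(t) → x^ρ` as `t → ∞` for all `x > 0` (with `F_μ(t) > 0` for large `t`),
then `Ψ_μ(τλ)/Ψ_μ(τ) → λ^{-ρ}` as `τ ↓ 0` for all `λ > 0`, and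
`Ψ_μ(1/t) ∼ Γ(ρ+1) F_μ(t)` as `t → ∞`. -/
theorem karamata_abelian (μ : Measure ℝ≥0)
    [IsLocallyFiniteMeasure μ] (hreg : μ.InnerRegular)
    (hfin : ∀ l : ℝ, 0 < l →
      (∫⁻ x, ENNReal.ofReal (Real.exp (-(l * (x : ℝ)))) ∂μ) ≠ ⊤)
    (Ψ : ℝ → ℝ) (hΨ : ∀ l : ℝ, Ψ l = (∫⁻ x, ENNReal.ofReal (Real.exp (-(l * (x : ℝ)))) ∂μ).toReal)
    (F : ℝ≥0 → ℝ) (hFdef : ∀ t : ℝ≥0, F t = (μ (Set.Iic t)).toReal)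
    (ρ : ℝ) (hρ : 0 ≤ ρ)
    (hpos : ∀ᶠ t : ℝ≥0 in atTop, 0 < F t)
    (hF : ∀ x : ℝ≥0, 0 < x →
      Tendsto (fun t : ℝ≥0 => F (t * x) / F t) atTop (𝓝 ((x : ℝ) ^ ρ))) :
    (∀ l : ℝ, 0 < l →
      Tendsto (fun τ : ℝ => Ψ (τ * l) / Ψ τ) (𝓝[>] 0) (𝓝 (l ^ (-ρ)))) ∧
    Tendsto (fun t : ℝ≥0 => Ψ (1 / (t : ℝ)) / (Real.Gamma (ρ + 1) * F t)) atTop (𝓝 1) :=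
  karamata_abelian_general μ Ψ hΨ F hFdef ρ hρ hpos hF
end

section
/- Let μ be the signed measure on [0,∞) with density f(x) = x(1/2 + cos x) with respect to Lebesgue measure. Then its Laplace transform is Ψ_μ(τ) = (3τ⁴ + 1) / (2(τ³ + τ)²) for τ > 0, and Ψ_μ(τ) = 1/(2τ²) + o(1/τ) as τ ↓ 0; in particular τ ↦ Ψ_μ(1/τ) is regularly varying at infinity with index 2. -/
open MeasureTheory Filter Topology Set Asymptotics

/-!
Writing `cos x = (e^{ix} + e^{-ix}) / 2`, the density becomes a combination of `x e^{-r x}` with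
`Re r = τ > 0`, whose Laplace transform is `1 / r²`. Hence
`Ψ(τ) = 1 / (2τ²) + (τ² - 1) / (τ² + 1)²`: the second term is bounded near `0`, and
`τ² Ψ(τ) → 1/2`, i.e. `Ψ(1/t) ~ t² / 2`, which forces regular variation of index `2`.
-/

section LaplaceTransform

open Complex

theorem integrableOn_mul_cexp_neg_mul_Ioi {r : ℂ} (hr : 0 < r.re) :
    IntegrableOn (fun x : ℝ => (x : ℂ) * cexp (-(r * x))) (Ioi 0) := by
  refine (integrableOn_rpow_mul_exp_neg_mul_rpow (s := 1) (p := 1) (by norm_num) one_pos hr).mono'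
    (by fun_prop) ?_
  filter_upwards [ae_restrict_mem measurableSet_Ioi] with x hx
  simp [Complex.norm_exp, abs_of_pos (mem_Ioi.mp hx)]

theorem tendsto_pow_mul_cexp_neg_mul_atTop {r : ℂ} (hr : 0 < r.re) (n : ℕ) :
    Tendsto (fun x : ℝ => (x : ℂ) ^ n * cexp (-(r * x))) atTop (𝓝 0) := by
  rw [tendsto_zero_iff_norm_tendsto_zero]
  refine (tendsto_rpow_mul_exp_neg_mul_atTop_nhds_zero n r.re hr).congr' ?_
  filter_upwards [eventually_ge_atTop 0] with x hx
  simp [Complex.norm_exp, abs_of_nonneg hx]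

theorem integral_mul_cexp_neg_mul_Ioi {r : ℂ} (hr : 0 < r.re) :
    ∫ x : ℝ in Ioi 0, (x : ℂ) * cexp (-(r * x)) = 1 / r ^ 2 := by
  have hr0 : r ≠ 0 := fun h => by simp [h] at hr
  set F : ℝ → ℂ := fun x => -(x / r + 1 / r ^ 2) * cexp (-(r * x))
  have hderiv (x : ℝ) : HasDerivAt F (x * cexp (-(r * x))) x := by
    have hexp : HasDerivAt (fun x : ℝ => cexp (-(r * x))) (cexp (-(r * x)) * -r) x := by
      simpa using ((hasDerivAt_id (x : ℂ)).const_mul r).neg.cexp.comp_ofReal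
    have hlin : HasDerivAt (fun x : ℝ => -((x : ℂ) / r + 1 / r ^ 2)) (-(1 / r)) x := by
      simpa using (((hasDerivAt_id (x : ℂ)).div_const r).add_const (1 / r ^ 2)).neg.comp_ofReal
    refine (hlin.mul hexp).congr_deriv ?_
    field_simp
    ring
  have hlim : Tendsto F atTop (𝓝 0) := by
    have h := ((tendsto_pow_mul_cexp_neg_mul_atTop hr 1).div_const r).add
      ((tendsto_pow_mul_cexp_neg_mul_atTop hr 0).div_const (r ^ 2))
    convert h.neg using 2 with x
    · simp only [F]
      ring
    · simp
  rw [integral_Ioi_of_hasDerivAt_of_tendsto' (fun x _ => hderiv x)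
    (integrableOn_mul_cexp_neg_mul_Ioi hr) hlim]
  simp [F]

theorem ofReal_exp_neg_mul_mul_half_add_cos (τ x : ℝ) :
    ((Real.exp (-(τ * x)) * (x * (1 / 2 + Real.cos x)) : ℝ) : ℂ) =
      1 / 2 * ((x : ℂ) * cexp (-(τ * x))) + 1 / 2 * ((x : ℂ) * cexp (-((τ - I) * x)))
        + 1 / 2 * ((x : ℂ) * cexp (-((τ + I) * x))) := by
  have hsub : cexp (-((τ - I) * x)) = cexp (-(τ * x)) * cexp (x * I) := by
    rw [← Complex.exp_add]
    ring_nf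
  have hadd : cexp (-((τ + I) * x)) = cexp (-(τ * x)) * cexp (-x * I) := by
    rw [← Complex.exp_add]
    ring_nf
  push_cast
  rw [hsub, hadd, Complex.cos]
  ring

theorem integral_exp_neg_mul_mul_half_add_cos {τ : ℝ} (hτ : 0 < τ) :
    ∫ x in Ioi (0 : ℝ), Real.exp (-(τ * x)) * (x * (1 / 2 + Real.cos x)) =
      1 / (2 * τ ^ 2) + (τ ^ 2 - 1) / (τ ^ 2 + 1) ^ 2 := by
  apply ofReal_injective
  rw [← integral_complex_ofReal]
  simp_rw [ofReal_exp_neg_mul_mul_half_add_cos]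
  have hre : 0 < (τ : ℂ).re := by simpa using hτ
  have hre_sub : 0 < ((τ : ℂ) - I).re := by simpa using hτ
  have hre_add : 0 < ((τ : ℂ) + I).re := by simpa using hτ
  have hint {r : ℂ} (hr : 0 < r.re) := (integrableOn_mul_cexp_neg_mul_Ioi hr).const_mul (1 / 2 : ℂ)
  rw [integral_add ((hint hre).add (hint hre_sub) : Integrable (fun x => _ + _) _) (hint hre_add),
    integral_add (hint hre) (hint hre_sub), integral_const_mul, integral_const_mul,
    integral_const_mul, integral_mul_cexp_neg_mul_Ioi hre, integral_mul_cexp_neg_mul_Ioi hre_sub,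
    integral_mul_cexp_neg_mul_Ioi hre_add]
  have hτ0 : (τ : ℂ) ≠ 0 := by exact_mod_cast hτ.ne'
  have hτ_sub : (τ : ℂ) - I ≠ 0 := fun h => by simp [h] at hre_sub
  have hτ_add : (τ : ℂ) + I ≠ 0 := fun h => by simp [h] at hre_add
  have hfactor : (τ : ℂ) ^ 2 + 1 = (τ - I) * (τ + I) := by
    ring_nf
    rw [I_sq]
    ring
  push_cast
  rw [hfactor]
  field_simp
  ring_nf
  rw [I_sq]
  ring

end LaplaceTransform

theorem continuous_sq_sub_one_div_sq_add_one_sq :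
    Continuous fun τ : ℝ => (τ ^ 2 - 1) / (τ ^ 2 + 1) ^ 2 :=
  (by fun_prop : Continuous fun τ : ℝ => τ ^ 2 - 1).div (by fun_prop) fun τ => by positivity

theorem isLittleO_one_div_of_tendsto_nhdsGT_zero {f : ℝ → ℝ} {c : ℝ}
    (hf : Tendsto f (𝓝[>] 0) (𝓝 c)) : f =o[𝓝[>] 0] fun τ => 1 / τ := by
  have hinv : Tendsto (fun τ : ℝ => ‖1 / τ‖) (𝓝[>] 0) atTop := by
    simpa [Function.comp_def] using tendsto_norm_atTop_atTop.comp tendsto_inv_nhdsGT_zero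
  exact (hf.isBigO_one ℝ).trans_isLittleO (isLittleO_one_left_iff ℝ |>.mpr hinv)

def IsRegularlyVaryingAtTop (g : ℝ → ℝ) (ρ : ℝ) : Prop :=
  ∀ x : ℝ, 0 < x → Tendsto (fun t => g (t * x) / g t) atTop (𝓝 (x ^ ρ))

theorem isRegularlyVaryingAtTop_of_tendsto_div_rpow {g : ℝ → ℝ} {ρ c : ℝ} (hc : c ≠ 0)
    (hg : Tendsto (fun t => g t / t ^ ρ) atTop (𝓝 c)) : IsRegularlyVaryingAtTop g ρ := by
  intro x hx
  have h := ((hg.comp (tendsto_id.atTop_mul_const hx)).div hg hc).mul_const (x ^ ρ)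
  rw [div_self hc, one_mul] at h
  refine h.congr' ?_
  filter_upwards [eventually_gt_atTop 0] with t ht
  simp only [Function.comp_apply, id, Pi.div_apply]
  rw [Real.mul_rpow ht.le hx.le]
  have : 0 < t ^ ρ := by positivity
  have : 0 < x ^ ρ := by positivity
  field_simp

/-- for the signed measure on `[0,∞)` with density
`f(x) = x (1/2 + cos x)` w.r.t. Lebesgue measure, the Laplace transform satisfies
`Ψ_μ(τ) = (3τ⁴ + 1)/(2 (τ³ + τ)²)` for `τ > 0`, `Ψ_μ(τ) = 1/(2τ²) + o(1/τ)` as `τ ↓ 0`,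
and `τ ↦ Ψ_μ(1/τ)` is regularly varying at infinity with index `2`. -/
theorem laplace_of_cosine_density (Ψ : ℝ → ℝ)
    (hΨ : ∀ τ : ℝ, Ψ τ =
      ∫ x in Set.Ioi (0 : ℝ), Real.exp (-(τ * x)) * (x * (1 / 2 + Real.cos x))) :
    (∀ τ : ℝ, 0 < τ → Ψ τ = (3 * τ ^ 4 + 1) / (2 * (τ ^ 3 + τ) ^ 2)) ∧
    (fun τ : ℝ => Ψ τ - 1 / (2 * τ ^ 2)) =o[𝓝[>] (0 : ℝ)] (fun τ : ℝ => 1 / τ) ∧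
    (∀ x : ℝ, 0 < x →
      Tendsto (fun t : ℝ => Ψ (1 / (t * x)) / Ψ (1 / t)) atTop (𝓝 (x ^ (2 : ℝ)))) := by
  have hΨ' (τ : ℝ) (hτ : 0 < τ) : Ψ τ = 1 / (2 * τ ^ 2) + (τ ^ 2 - 1) / (τ ^ 2 + 1) ^ 2 :=
    (hΨ τ).trans (integral_exp_neg_mul_mul_half_add_cos hτ)
  have hφ := continuous_sq_sub_one_div_sq_add_one_sq.tendsto 0
  refine ⟨fun τ hτ => ?_, ?_, ?_⟩
  · rw [hΨ' τ hτ]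
    field_simp
    ring
  · have hdiff : Tendsto (fun τ => Ψ τ - 1 / (2 * τ ^ 2)) (𝓝[>] 0) (𝓝 (-1)) := by
      refine (tendsto_nhdsWithin_of_tendsto_nhds (by simpa using hφ)).congr' ?_
      filter_upwards [self_mem_nhdsWithin] with τ (hτ : 0 < τ)
      rw [hΨ' τ hτ, add_sub_cancel_left]
    exact isLittleO_one_div_of_tendsto_nhdsGT_zero hdiff
  · have hsmall : Tendsto (fun τ => τ ^ 2 * Ψ τ) (𝓝[>] 0) (𝓝 (1 / 2)) := by
      have h := (((continuous_pow 2).tendsto 0).mul hφ).const_add (1 / 2)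
      refine (tendsto_nhdsWithin_of_tendsto_nhds (by simpa using h)).congr' ?_
      filter_upwards [self_mem_nhdsWithin] with τ (hτ : 0 < τ)
      rw [hΨ' τ hτ]
      field_simp
    have hlarge : Tendsto (fun t => Ψ (1 / t) / t ^ (2 : ℝ)) atTop (𝓝 (1 / 2)) := by
      refine (hsmall.comp tendsto_inv_atTop_nhdsGT_zero).congr fun t => ?_
      rw [Function.comp_apply, Real.rpow_two, one_div, inv_pow, inv_mul_eq_div]
    exact isRegularlyVaryingAtTop_of_tendsto_div_rpow (by norm_num) hlarge
end

section
/- Let μ be the signed measure on [0,∞) with density f(x) = x(1/2 + cos x). Then liminf_{τ↓0} |Ψ_μ(τ)| / Ψ_{|μ|}(τ) ≥ 1/3 > 0, where |μ| has density x|1/2 + cos x|; in particular |μ|'s density is bounded by (3/2)x so Ψ_{|μ|}(τ) ≤ 3/(2τ²). -/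
open MeasureTheory Filter Topology Set

/-!
Since `cos x = Re e^{ix}`, the oscillating part of `Ψ_μ(τ)` is the real part of
`∫₀^∞ x e^{-(τ - i)x} dx = 1/(τ - i)²`, which has modulus `1/(τ² + 1) ≤ 1`. Hence
`Ψ_μ(τ) ≥ 1/(2τ²) - 1`, while `Ψ_{|μ|}(τ) ≤ (3/2) ∫₀^∞ x e^{-τx} dx = 3/(2τ²)`, so the ratio is
at least `(1 - 2τ²)/3 → 1/3`.
-/

lemma Filter.le_liminf_of_tendsto_of_eventually_le {α β : Type*}
    [ConditionallyCompleteLinearOrder β] [TopologicalSpace β] [OrderTopology β]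
    {l : Filter α} [l.NeBot] {f g : α → β} {a b : β}
    (hg : Tendsto g l (𝓝 a)) (hgf : g ≤ᶠ[l] f) (hfb : ∀ x, f x ≤ b) :
    a ≤ liminf f l :=
  hg.liminf_eq ▸ liminf_le_liminf hgf hg.isBoundedUnder_ge (isCoboundedUnder_ge_of_le l hfb)

lemma integral_mul_exp_neg_mul_Ioi {τ : ℝ} (hτ : 0 < τ) :
    ∫ x in Ioi (0 : ℝ), x * Real.exp (-(τ * x)) = 1 / τ ^ 2 := by
  have h := Real.integral_rpow_mul_exp_neg_mul_Ioi (a := 2) two_pos hτ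
  norm_num [Real.rpow_one, Real.rpow_two] at h
  simpa [neg_mul] using h

lemma integrableOn_mul_exp_neg_mul_Ioi {τ : ℝ} (hτ : 0 < τ) :
    IntegrableOn (fun x : ℝ => x * Real.exp (-(τ * x))) (Ioi 0) :=
  .of_integral_ne_zero (by rw [integral_mul_exp_neg_mul_Ioi hτ]; positivity)

lemma integrableOn_ofReal_mul_cexp_neg_mul_Ioi {c : ℂ} (hc : 0 < c.re) :
    IntegrableOn (fun x : ℝ => (x : ℂ) * Complex.exp (-(c * x))) (Ioi 0) := by
  refine (integrableOn_mul_exp_neg_mul_Ioi hc).mono' (by fun_prop) ?_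
  filter_upwards [ae_restrict_mem measurableSet_Ioi] with x hx
  simp [Complex.norm_exp, abs_of_pos (mem_Ioi.mp hx)]

lemma tendsto_ofReal_pow_mul_cexp_neg_mul_atTop {c : ℂ} (hc : 0 < c.re) (n : ℕ) :
    Tendsto (fun x : ℝ => (x : ℂ) ^ n * Complex.exp (-(c * x))) atTop (𝓝 0) := by
  rw [tendsto_zero_iff_norm_tendsto_zero]
  refine (tendsto_rpow_mul_exp_neg_mul_atTop_nhds_zero n _ hc).congr' ?_
  filter_upwards [eventually_ge_atTop 0] with x hx
  simp [Complex.norm_exp, abs_of_nonneg hx]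

lemma hasDerivAt_cexp_neg_mul (c : ℂ) (x : ℝ) :
    HasDerivAt (fun x : ℝ => Complex.exp (-(c * x))) (-c * Complex.exp (-(c * x))) x := by
  simpa [mul_comm] using ((hasDerivAt_id (x : ℂ)).const_mul c).neg.cexp.comp_ofReal

lemma integral_ofReal_mul_cexp_neg_mul_Ioi {c : ℂ} (hc : 0 < c.re) :
    ∫ x in Ioi (0 : ℝ), (x : ℂ) * Complex.exp (-(c * x)) = 1 / c ^ 2 := by
  have hc0 : c ≠ 0 := by rintro rfl; simp at hc
  set F : ℝ → ℂ := fun x => -((x : ℂ) / c + 1 / c ^ 2) * Complex.exp (-(c * x))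
  have hF : ∀ x ∈ Ici (0 : ℝ), HasDerivAt F ((x : ℂ) * Complex.exp (-(c * x))) x := by
    intro x _
    have h := ((((hasDerivAt_id (x : ℂ)).div_const c).add_const (1 / c ^ 2)).neg.comp_ofReal).mul
      (hasDerivAt_cexp_neg_mul c x)
    refine h.congr_deriv ?_
    simp only [Pi.neg_apply, id]
    field_simp
    ring
  have hlim : Tendsto F atTop (𝓝 0) := by
    have h := (((tendsto_ofReal_pow_mul_cexp_neg_mul_atTop hc 1).div_const c).add
      ((tendsto_ofReal_pow_mul_cexp_neg_mul_atTop hc 0).div_const (c ^ 2))).neg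
    rw [zero_div, zero_div, add_zero, neg_zero] at h
    refine h.congr fun x => ?_
    simp only [F]
    ring
  rw [integral_Ioi_of_hasDerivAt_of_tendsto' hF (integrableOn_ofReal_mul_cexp_neg_mul_Ioi hc) hlim]
  simp [F]

lemma re_ofReal_mul_cexp_neg_sub_I_mul (τ x : ℝ) :
    ((x : ℂ) * Complex.exp (-((τ - Complex.I) * x))).re =
      x * Real.exp (-(τ * x)) * Real.cos x := by
  rw [Complex.re_ofReal_mul, Complex.exp_re]
  simp [mul_assoc]

lemma integrableOn_mul_exp_neg_mul_mul_cos_Ioi {τ : ℝ} (hτ : 0 < τ) :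
    IntegrableOn (fun x : ℝ => x * Real.exp (-(τ * x)) * Real.cos x) (Ioi 0) := by
  simp only [← re_ofReal_mul_cexp_neg_sub_I_mul]
  exact (integrableOn_ofReal_mul_cexp_neg_mul_Ioi (by simpa using hτ)).re

lemma integral_mul_exp_neg_mul_mul_cos_Ioi {τ : ℝ} (hτ : 0 < τ) :
    ∫ x in Ioi (0 : ℝ), x * Real.exp (-(τ * x)) * Real.cos x =
      (1 / ((τ : ℂ) - Complex.I) ^ 2).re := by
  have hc : 0 < ((τ : ℂ) - Complex.I).re := by simpa using hτ
  simp only [← re_ofReal_mul_cexp_neg_sub_I_mul, ← integral_ofReal_mul_cexp_neg_mul_Ioi hc]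
  exact integral_re (integrableOn_ofReal_mul_cexp_neg_mul_Ioi hc)

lemma abs_integral_mul_exp_neg_mul_mul_cos_Ioi_le_one {τ : ℝ} (hτ : 0 < τ) :
    |∫ x in Ioi (0 : ℝ), x * Real.exp (-(τ * x)) * Real.cos x| ≤ 1 := by
  rw [integral_mul_exp_neg_mul_mul_cos_Ioi hτ]
  refine (Complex.abs_re_le_norm _).trans ?_
  have h_one_le : 1 ≤ ‖(τ : ℂ) - Complex.I‖ := by
    simpa using Complex.abs_im_le_norm ((τ : ℂ) - Complex.I)
  rw [norm_div, norm_one, norm_pow]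
  exact div_le_one_of_le₀ (one_le_pow₀ h_one_le) (by positivity)

lemma mul_abs_one_half_add_cos_le {x : ℝ} (hx : 0 ≤ x) :
    x * |1 / 2 + Real.cos x| ≤ 3 / 2 * x := by
  have h : |1 / 2 + Real.cos x| ≤ 3 / 2 :=
    abs_le.2 ⟨by linarith [Real.neg_one_le_cos x], by linarith [Real.cos_le_one x]⟩
  rw [mul_comm (3 / 2)]
  exact mul_le_mul_of_nonneg_left h hx

lemma abs_integral_exp_neg_mul_mul_le (τ : ℝ) (f : ℝ → ℝ) :
    |∫ x in Ioi (0 : ℝ), Real.exp (-(τ * x)) * (x * f x)| ≤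
      ∫ x in Ioi (0 : ℝ), Real.exp (-(τ * x)) * (x * |f x|) := by
  rw [← Real.norm_eq_abs]
  refine (norm_integral_le_integral_norm _).trans_eq
    (setIntegral_congr_fun measurableSet_Ioi fun x (hx : 0 < x) => ?_)
  simp [abs_of_pos hx]

lemma one_div_two_mul_sq_sub_one_le_integral {τ : ℝ} (hτ : 0 < τ) :
    1 / (2 * τ ^ 2) - 1 ≤
      ∫ x in Ioi (0 : ℝ), Real.exp (-(τ * x)) * (x * (1 / 2 + Real.cos x)) := by
  have hsplit : ∫ x in Ioi (0 : ℝ), Real.exp (-(τ * x)) * (x * (1 / 2 + Real.cos x)) =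
      1 / 2 * (1 / τ ^ 2) + ∫ x in Ioi (0 : ℝ), x * Real.exp (-(τ * x)) * Real.cos x := by
    rw [← integral_mul_exp_neg_mul_Ioi hτ, ← integral_const_mul,
      ← integral_add ((integrableOn_mul_exp_neg_mul_Ioi hτ).const_mul _)
        (integrableOn_mul_exp_neg_mul_mul_cos_Ioi hτ)]
    congr 1 with x
    ring
  have hcos := abs_le.1 (abs_integral_mul_exp_neg_mul_mul_cos_Ioi_le_one hτ)
  rw [hsplit]
  linarith [show 1 / (2 * τ ^ 2) = 1 / 2 * (1 / τ ^ 2) by ring]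

lemma integral_exp_neg_mul_mul_abs_le {τ : ℝ} (hτ : 0 < τ) :
    ∫ x in Ioi (0 : ℝ), Real.exp (-(τ * x)) * (x * |1 / 2 + Real.cos x|) ≤ 3 / (2 * τ ^ 2) := by
  have hle : ∫ x in Ioi (0 : ℝ), Real.exp (-(τ * x)) * (x * |1 / 2 + Real.cos x|) ≤
      ∫ x in Ioi (0 : ℝ), 3 / 2 * (x * Real.exp (-(τ * x))) := by
    refine integral_mono_of_nonneg ?_ ((integrableOn_mul_exp_neg_mul_Ioi hτ).const_mul _) ?_
    all_goals filter_upwards [ae_restrict_mem measurableSet_Ioi] with x hx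
    · have := le_of_lt (mem_Ioi.mp hx)
      positivity
    · have := mul_abs_one_half_add_cos_le (le_of_lt (mem_Ioi.mp hx))
      nlinarith [Real.exp_pos (-(τ * x))]
  refine hle.trans_eq ?_
  rw [integral_const_mul, integral_mul_exp_neg_mul_Ioi hτ]
  field_simp

lemma one_sub_two_mul_sq_div_three_le_abs_div {τ p q : ℝ} (hτ : 0 < τ) (hτ2 : 2 * τ ^ 2 < 1)
    (hp : 1 / (2 * τ ^ 2) - 1 ≤ p) (hpq : |p| ≤ q) (hq : q ≤ 3 / (2 * τ ^ 2)) :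
    (1 - 2 * τ ^ 2) / 3 ≤ |p| / q := by
  have hpos : 0 < 1 / (2 * τ ^ 2) - 1 := by
    rw [sub_pos, lt_div_iff₀ (by positivity)]
    linarith
  calc (1 - 2 * τ ^ 2) / 3 = (1 / (2 * τ ^ 2) - 1) / (3 / (2 * τ ^ 2)) := by
        field_simp
    _ ≤ |p| / q := div_le_div₀ (abs_nonneg p) (hp.trans (le_abs_self p))
        (hpos.trans_le (hp.trans ((le_abs_self p).trans hpq))) hq

/-- for the signed measure with density `f(x) = x (1/2 + cos x)` and its
variation with density `x |1/2 + cos x|`, one has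
`liminf_{τ↓0} |Ψ_μ(τ)|/Ψ_{|μ|}(τ) ≥ 1/3 > 0`; the variation's density is bounded by
`(3/2) x`, so `Ψ_{|μ|}(τ) ≤ 3/(2τ²)` for `τ > 0`. -/
theorem liminf_ratio_cosine_density (Ψ Ψabs : ℝ → ℝ)
    (hΨ : ∀ τ : ℝ, Ψ τ =
      ∫ x in Set.Ioi (0 : ℝ), Real.exp (-(τ * x)) * (x * (1 / 2 + Real.cos x)))
    (hΨabs : ∀ τ : ℝ, Ψabs τ =
      ∫ x in Set.Ioi (0 : ℝ), Real.exp (-(τ * x)) * (x * |1 / 2 + Real.cos x|)) :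
    (∀ x : ℝ, 0 ≤ x → x * |1 / 2 + Real.cos x| ≤ (3 / 2) * x) ∧
    (∀ τ : ℝ, 0 < τ → Ψabs τ ≤ 3 / (2 * τ ^ 2)) ∧
    ((1 / 3 : ℝ) ≤ Filter.liminf (fun τ : ℝ => |Ψ τ| / Ψabs τ) (𝓝[>] 0) ∧
      (0 : ℝ) < Filter.liminf (fun τ : ℝ => |Ψ τ| / Ψabs τ) (𝓝[>] 0)) := by
  have hΨabs_le : ∀ τ, 0 < τ → Ψabs τ ≤ 3 / (2 * τ ^ 2) := fun τ hτ =>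
    hΨabs τ ▸ integral_exp_neg_mul_mul_abs_le hτ
  have hΨ_le : ∀ τ, |Ψ τ| ≤ Ψabs τ := fun τ => by
    rw [hΨ, hΨabs]
    exact abs_integral_exp_neg_mul_mul_le τ _
  have hratio_le_one : ∀ τ, |Ψ τ| / Ψabs τ ≤ 1 := fun τ =>
    div_le_one_of_le₀ (hΨ_le τ) ((abs_nonneg _).trans (hΨ_le τ))
  have hratio_ge : ∀ᶠ τ in 𝓝[>] 0, (1 - 2 * τ ^ 2) / 3 ≤ |Ψ τ| / Ψabs τ := by
    filter_upwards [Ioo_mem_nhdsGT (by norm_num : (0 : ℝ) < 1 / 2)] with τ ⟨hτ, hτ'⟩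
    exact one_sub_two_mul_sq_div_three_le_abs_div hτ (by nlinarith)
      (hΨ τ ▸ one_div_two_mul_sq_sub_one_le_integral hτ) (hΨ_le τ) (hΨabs_le τ hτ)
  have hlim : Tendsto (fun τ : ℝ => (1 - 2 * τ ^ 2) / 3) (𝓝[>] 0) (𝓝 (1 / 3)) :=
    tendsto_nhdsWithin_of_tendsto_nhds
      ((by fun_prop : Continuous fun τ : ℝ => (1 - 2 * τ ^ 2) / 3).tendsto' 0 _ (by norm_num))
  have h13 := le_liminf_of_tendsto_of_eventually_le hlim hratio_ge hratio_le_one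
  exact ⟨fun x => mul_abs_one_half_add_cos_le, hΨabs_le, h13, by linarith⟩
end
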